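/- arXiv:1510.08234 — 10 statements merged into one kernel-verified Lean document; each statement's English description precedes it below -/
import Mathlib

section
/- Let r0 > 0, ρ > 0, φ ∈ 𝒦(0,r0) and x̄ ∈ argmin f. If φ′(f(x))·‖∂⁰f(x)‖ ≥ 1 for every x ∈ B(x̄,ρ) with 0 < f(x) < r0, then dist(x, S) ≤ φ(f(x)) for every x ∈ B(x̄,ρ) with 0 < f(x) < r0. (Theorem 3.2(i): the Kurdyka–Łojasiewicz inequality implies an error bound.) -/
/-
Run the proximal point method `u (k + 1) = argmin (f + μ/2 ‖· - u k‖²)` from `u 0 = x`.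
Each step is an implicit subgradient step, `μ (u k - u (k + 1)) ∈ ∂f (u (k + 1))`, so the
values decrease by at least `μ d k ²` with `d k = ‖u k - u (k + 1)‖`, and the iterates are
Fejér monotone with respect to `x̄`, hence stay in `B(x̄, ρ)`, with values tending to `0`.
There the KL inequality bounds `1 / (μ d k)` by `φ' (f (u (k + 1)))`, and concavity of `φ` turns
this into `2 d (k + 1) ≤ d k + φ (f (u (k + 1))) - φ (f (u (k + 2)))`. Summing, the iterates
have length at most `2 d 0 + φ (f x)`, so they converge to a minimizer and
`dist (x, S) ≤ 2 √(f x / μ) + φ (f x)`. Let `μ → ∞`.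
-/

open Metric Set Filter
open scoped RealInnerProductSpace

noncomputable section

variable {H : Type*} [NormedAddCommGroup H] [InnerProductSpace ℝ H] [CompleteSpace H]

/-- The convex subdifferential of an extended-real-valued function:
`∂f(x) = {u : f(y) ≥ f(x) + ⟨u, y - x⟩ for all y}`. -/
def subdiff (f : H → EReal) (x : H) : Set H :=
  {u | ∀ y : H, f x + ((⟪u, y - x⟫ : ℝ) : EReal) ≤ f y}

/-- The set of global minimizers of `f`. -/
def argminSet (f : H → EReal) : Set H := {x | ∀ y, f x ≤ f y}

open scoped Topology

theorem LowerSemicontinuous.le_of_tendsto {X γ : Type*} [TopologicalSpace X]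
    [CompleteLinearOrder γ] [TopologicalSpace γ] [OrderTopology γ] {g : X → γ}
    (hg : LowerSemicontinuous g) {u : ℕ → X} {p : X} {L : γ}
    (hu : Tendsto u atTop (𝓝 p)) (hgu : Tendsto (g ∘ u) atTop (𝓝 L)) : g p ≤ L :=
  calc g p ≤ liminf g (𝓝 p) := hg.le_liminf p
    _ ≤ liminf (g ∘ u) atTop := hu.liminf_le_liminf_comp
    _ = L := hgu.liminf_eq

theorem ConcaveOn.mul_sub_le_sub_of_hasDerivAt {s : Set ℝ} {φ : ℝ → ℝ} {φ'a a b : ℝ}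
    (hφ : ConcaveOn ℝ s φ) (ha : a ∈ s) (hb : b ∈ s) (hba : b ≤ a)
    (hd : HasDerivAt φ φ'a a) : φ'a * (a - b) ≤ φ a - φ b := by
  rcases hba.eq_or_lt with rfl | hlt
  · simp
  · have := hφ.le_slope_of_hasDerivAt hb ha hlt hd
    rwa [slope_def_field, le_div_iff₀ (sub_pos.2 hlt)] at this

theorem ConcaveOn.monotoneOn_Ico_of_hasDerivAt_pos {φ φ' : ℝ → ℝ} {r0 : ℝ}
    (hφ : ConcaveOn ℝ (Ico 0 r0) φ) (hd : ∀ s ∈ Ioo 0 r0, HasDerivAt φ (φ' s) s)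
    (hpos : ∀ s ∈ Ioo 0 r0, 0 < φ' s) : MonotoneOn φ (Ico 0 r0) := by
  intro b hb a ha hba
  rcases hba.eq_or_lt with rfl | hlt
  · rfl
  · have ha' : a ∈ Ioo 0 r0 := ⟨hb.1.trans_lt hlt, ha.2⟩
    have := hφ.mul_sub_le_sub_of_hasDerivAt ha hb hba (hd a ha')
    nlinarith [hpos a ha']

/- KL bounds `1 / (μ d)` by `φ' a`, and concavity bounds `φ' a * μ d'²` by `φ a - φ a'`;
so `d'² ≤ d (φ a - φ a')`, and AM–GM concludes. -/
theorem two_mul_add_le_of_concaveOn {φ φ' : ℝ → ℝ} {r0 μ a a' d d' : ℝ}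
    (hφ : ConcaveOn ℝ (Ico 0 r0) φ) (hφ' : ∀ s ∈ Ioo 0 r0, HasDerivAt φ (φ' s) s)
    (hμ : 0 < μ) (ha' : 0 ≤ a') (har : a < r0) (hd : 0 ≤ d)
    (hdesc : a' + μ * d' ^ 2 ≤ a) (hKL : 0 < a → 1 ≤ φ' a * (μ * d)) :
    2 * d' + φ a' ≤ d + φ a := by
  have ha'a : a' ≤ a := le_of_add_le_of_nonneg_left hdesc (by positivity)
  rcases (ha'.trans ha'a).eq_or_lt with rfl | ha
  · have hd' : d' ^ 2 ≤ 0 := le_of_mul_le_mul_left (by linarith) hμ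
    obtain rfl : d' = 0 := pow_eq_zero_iff two_ne_zero |>.1 (le_antisymm hd' (sq_nonneg _))
    obtain rfl : a' = 0 := le_antisymm ha'a ha'
    linarith
  · have hKL := hKL ha
    have hφ'a : 0 < φ' a := by nlinarith [mul_nonneg hμ.le hd]
    have htan := hφ.mul_sub_le_sub_of_hasDerivAt ⟨ha.le, har⟩ ⟨ha', ha'a.trans_lt har⟩ ha'a
      (hφ' a ⟨ha, har⟩)
    have hΔ : φ' a * (μ * d' ^ 2) ≤ φ a - φ a' :=
      le_trans (mul_le_mul_of_nonneg_left (by linarith) hφ'a.le) htan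
    have hΔ0 : 0 ≤ φ a - φ a' := le_trans (by positivity) hΔ
    have hsq : d' ^ 2 ≤ d * (φ a - φ a') := by nlinarith [sq_nonneg d']
    nlinarith [sq_nonneg (d - (φ a - φ a'))]

theorem sum_range_le_of_two_mul_add_le {d ψ : ℕ → ℝ} (hd : ∀ k, 0 ≤ d k) (hψ : ∀ k, 0 ≤ ψ k)
    (h : ∀ k, 2 * d (k + 1) + ψ (k + 2) ≤ d k + ψ (k + 1)) (N : ℕ) :
    ∑ k ∈ Finset.range N, d k ≤ 2 * d 0 + ψ 1 := by
  have key : ∀ n, ∑ k ∈ Finset.range (n + 1), d k + d n + ψ (n + 1) ≤ 2 * d 0 + ψ 1 := by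
    intro n
    induction n with
    | zero => simp [two_mul]
    | succ n ih =>
      rw [Finset.sum_range_succ]
      linarith [h n]
  have := key N
  rw [Finset.sum_range_succ] at this
  linarith [hd N, hψ (N + 1)]

theorem tendsto_atTop_zero_of_add_le {a e : ℕ → ℝ} (ha : ∀ k, 0 ≤ a k) (he : ∀ k, 0 ≤ e k)
    (h : ∀ k, a (k + 1) + e (k + 1) ≤ e k) : Tendsto a atTop (𝓝 0) := by
  have key : ∀ n, ∑ k ∈ Finset.range n, a (k + 1) + e n ≤ e 0 := by
    intro n
    induction n with
    | zero => simp
    | succ n ih =>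
      rw [Finset.sum_range_succ]
      linarith [h n]
  have hs : Summable fun k => a (k + 1) :=
    summable_of_sum_range_le (fun k => ha (k + 1)) fun n => by linarith [key n, he n]
  exact (tendsto_add_atTop_iff_nat 1).1 hs.tendsto_atTop_zero

section StrongConvexity

variable {E : Type*} [NormedAddCommGroup E] [InnerProductSpace ℝ E]

theorem ConvexOn.strongConvexOn_add_mul_sq_norm_sub {s : Set E} {F : E → ℝ}
    (hF : ConvexOn ℝ s F) (c : ℝ) (x : E) :
    StrongConvexOn s (2 * c) (fun y => F y + c * ‖y - x‖ ^ 2) := by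
  rw [strongConvexOn_iff_convex]
  refine (hF.add ((((-2 * c) • innerₛₗ ℝ x).convexOn hF.1).add_const (c * ‖x‖ ^ 2))).congr
    fun y _ => ?_
  simp only [Pi.add_apply, LinearMap.smul_apply, innerₛₗ_apply_apply, smul_eq_mul,
    norm_sub_sq_real, real_inner_comm x y]
  ring

theorem StrongConvexOn.mul_sq_norm_sub_le {s : Set E} {g : E → ℝ} {m b : ℝ}
    (hg : StrongConvexOn s m g) (hb : ∀ y ∈ s, b ≤ g y) {x y : E} (hx : x ∈ s) (hy : y ∈ s) :
    m / 4 * ‖x - y‖ ^ 2 ≤ g x + g y - 2 * b := by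
  have hhalf : (0 : ℝ) ≤ 1 / 2 := by norm_num
  have hmid := hg.2 hx hy hhalf hhalf (add_halves 1)
  have := hb _ (hg.1 hx hy hhalf hhalf (add_halves 1))
  simp only [smul_eq_mul] at hmid
  linarith

theorem StrongConvexOn.cauchySeq_of_tendsto {s : Set E} {g : E → ℝ} {m b : ℝ}
    (hg : StrongConvexOn s m g) (hm : 0 < m) (hb : ∀ y ∈ s, b ≤ g y) {u : ℕ → E}
    (hu : ∀ n, u n ∈ s) (hgu : Tendsto (g ∘ u) atTop (𝓝 b)) : CauchySeq u := by
  rw [cauchySeq_iff_tendsto_dist_atTop_0]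
  set e : ℕ × ℕ → ℝ := fun n => √(4 / m * (g (u n.1) + g (u n.2) - 2 * b))
  have he : Tendsto e atTop (𝓝 0) := by
    have hsum : Tendsto (fun n : ℕ × ℕ => g (u n.1) + g (u n.2)) atTop (𝓝 (b + b)) := by
      rw [← prod_atTop_atTop_eq]
      exact (hgu.comp tendsto_fst).add (hgu.comp tendsto_snd)
    simpa [← two_mul] using ((hsum.sub_const (2 * b)).const_mul (4 / m)).sqrt
  refine squeeze_zero (fun _ => dist_nonneg) (fun n => ?_) he
  rw [dist_eq_norm, ← Real.sqrt_sq (norm_nonneg _)]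
  refine Real.sqrt_le_sqrt ?_
  have := hg.mul_sq_norm_sub_le hb (hu n.1) (hu n.2)
  rw [div_mul_eq_mul_div, le_div_iff₀ hm]
  linarith

theorem ConvexOn.add_inner_le_of_forall_le_add_mul_sq_norm_sub {s : Set E} {F : E → ℝ} {c : ℝ}
    {x p y : E} (hF : ConvexOn ℝ s F) (hp : p ∈ s)
    (hmin : ∀ y ∈ s, F p + c * ‖p - x‖ ^ 2 ≤ F y + c * ‖y - x‖ ^ 2) (hy : y ∈ s) :
    F p + 2 * c * ⟪x - p, y - p⟫ ≤ F y := by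
  have hsmall : ∀ t ∈ Ioo (0 : ℝ) 1,
      F p - F y + 2 * c * ⟪x - p, y - p⟫ ≤ c * ‖y - p‖ ^ 2 * t := by
    rintro t ⟨ht0, ht1⟩
    have h1t : 0 ≤ 1 - t := by linarith
    have hconv := hF.2 hp hy h1t ht0.le (sub_add_cancel 1 t)
    have hle := hmin _ (hF.1 hp hy h1t ht0.le (sub_add_cancel 1 t))
    have hq : (1 - t) • p + t • y - x = -(x - p) + t • (y - p) := by module
    rw [hq, norm_add_sq_real, inner_neg_left, inner_smul_right, norm_neg, norm_smul,
      Real.norm_of_nonneg ht0.le, norm_sub_rev x p] at hle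
    simp only [smul_eq_mul] at hconv
    have : t * (F p - F y + 2 * c * ⟪x - p, y - p⟫) ≤ t * (c * ‖y - p‖ ^ 2 * t) := by
      nlinarith
    exact le_of_mul_le_mul_left this ht0
  have hlim : Tendsto (fun t => c * ‖y - p‖ ^ 2 * t) (𝓝[>] 0) (𝓝 0) := by
    simpa using ((continuous_const_mul (c * ‖y - p‖ ^ 2)).tendsto 0).mono_left nhdsWithin_le_nhds
  have := ge_of_tendsto hlim (eventually_of_mem (Ioo_mem_nhdsGT zero_lt_one) hsmall)
  linarith

end StrongConvexity

section Prox

variable {f : H → EReal}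

omit [CompleteSpace H] in
theorem convexOn_toReal_of_ne_top (hbot : ∀ x, f x ≠ ⊥)
    (hconv : ∀ x y : H, ∀ t : ℝ, 0 < t → t < 1 →
      f (t • x + (1 - t) • y) ≤ (t : EReal) * f x + ((1 - t : ℝ) : EReal) * f y) :
    ConvexOn ℝ {y | f y ≠ ⊤} fun y => (f y).toReal := by
  have key : ∀ ⦃x⦄, f x ≠ ⊤ → ∀ ⦃y⦄, f y ≠ ⊤ → ∀ ⦃a b : ℝ⦄, 0 < a → 0 < b → a + b = 1 →
      f (a • x + b • y) ≤ ((a * (f x).toReal + b * (f y).toReal : ℝ) : EReal) := by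
    intro x hx y hy a b ha hb hab
    obtain rfl : b = 1 - a := by linarith
    have := hconv x y a ha (by linarith)
    rwa [← EReal.coe_toReal hx (hbot x), ← EReal.coe_toReal hy (hbot y)] at this
  refine convexOn_iff_forall_pos.2 ⟨convex_iff_forall_pos.2 fun x hx y hy a b ha hb hab =>
    ne_top_of_le_ne_top (EReal.coe_ne_top _) (key hx hy ha hb hab),
    fun x hx y hy a b ha hb hab => ?_⟩
  have := key hx hy ha hb hab
  rw [← EReal.coe_toReal (ne_top_of_le_ne_top (EReal.coe_ne_top _) this) (hbot _)] at this
  exact_mod_cast this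

omit [CompleteSpace H] in
theorem toReal_add_inner_le_of_mem_subdiff (hbot : ∀ x, f x ≠ ⊥) {p v y : H}
    (hv : v ∈ subdiff f p) (hp : f p ≠ ⊤) (hy : f y ≠ ⊤) :
    (f p).toReal + ⟪v, y - p⟫ ≤ (f y).toReal := by
  have := hv y
  rw [← EReal.coe_toReal hp (hbot p), ← EReal.coe_toReal hy (hbot y)] at this
  exact_mod_cast this

omit [CompleteSpace H] in
theorem toReal_add_le_of_smul_sub_mem_subdiff (hbot : ∀ x, f x ≠ ⊥) {μ : ℝ} {x p z : H}
    (hv : μ • (x - p) ∈ subdiff f p) (hp : f p ≠ ⊤) (hz : f z ≠ ⊤) :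
    (f p).toReal + μ / 2 * (‖x - p‖ ^ 2 + ‖p - z‖ ^ 2) ≤ (f z).toReal + μ / 2 * ‖x - z‖ ^ 2 := by
  have h := toReal_add_inner_le_of_mem_subdiff hbot hv hp hz
  have hxz : x - z = (x - p) - (z - p) := by abel
  rw [real_inner_smul_left] at h
  rw [hxz, norm_sub_sq_real (x - p) (z - p), norm_sub_rev p z]
  linarith

theorem exists_forall_toReal_add_le (hbot : ∀ x, f x ≠ ⊥) (hlsc : LowerSemicontinuous f)
    (hconv : ConvexOn ℝ {y | f y ≠ ⊤} fun y => (f y).toReal) (hnonneg : ∀ y, 0 ≤ f y)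
    (hdom : ∃ z, f z ≠ ⊤) {c : ℝ} (hc : 0 < c) (x : H) :
    ∃ p, f p ≠ ⊤ ∧ ∀ y, f y ≠ ⊤ →
      (f p).toReal + c * ‖p - x‖ ^ 2 ≤ (f y).toReal + c * ‖y - x‖ ^ 2 := by
  set D := {y | f y ≠ ⊤}
  set g : H → ℝ := fun y => (f y).toReal + c * ‖y - x‖ ^ 2
  have hg : StrongConvexOn D (2 * c) g := hconv.strongConvexOn_add_mul_sq_norm_sub c x
  have hbdd : BddBelow (g '' D) :=
    ⟨0, by
      rintro _ ⟨y, -, rfl⟩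
      exact add_nonneg (EReal.toReal_nonneg (hnonneg y)) (by positivity)⟩
  set b := sInf (g '' D)
  have hb : ∀ y ∈ D, b ≤ g y := fun y hy => csInf_le hbdd ⟨y, hy, rfl⟩
  obtain ⟨z, hz⟩ := hdom
  obtain ⟨v, -, hv, hvg⟩ := exists_seq_tendsto_sInf (⟨g z, z, hz, rfl⟩ : (g '' D).Nonempty) hbdd
  choose u hu hgu using hvg
  have hgu' : g ∘ u = v := funext hgu
  obtain ⟨p, hp⟩ := cauchySeq_tendsto_of_complete
    (hg.cauchySeq_of_tendsto (by positivity) hb hu (hgu' ▸ hv))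
  have hfu : Tendsto (f ∘ u) atTop (𝓝 ((b - c * ‖p - x‖ ^ 2 : ℝ) : EReal)) := by
    have hfu_eq : f ∘ u = fun n => ((g (u n) - c * ‖u n - x‖ ^ 2 : ℝ) : EReal) := by
      ext n
      simp [g, EReal.coe_toReal (hu n) (hbot _)]
    rw [hfu_eq]
    refine continuous_coe_real_ereal.tendsto _ |>.comp (Tendsto.sub ?_ ?_)
    · simpa only [hgu] using hv
    · exact (((hp.sub_const x).norm).pow 2).const_mul c
  have hfp := hlsc.le_of_tendsto hp hfu
  have hpD : f p ≠ ⊤ := ne_top_of_le_ne_top (EReal.coe_ne_top _) hfp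
  refine ⟨p, hpD, fun y hy => ?_⟩
  rw [← EReal.coe_toReal hpD (hbot p), EReal.coe_le_coe_iff] at hfp
  linarith [hb y hy]

theorem exists_smul_sub_mem_subdiff (hbot : ∀ x, f x ≠ ⊥) (hlsc : LowerSemicontinuous f)
    (hconv : ConvexOn ℝ {y | f y ≠ ⊤} fun y => (f y).toReal) (hnonneg : ∀ y, 0 ≤ f y)
    (hdom : ∃ z, f z ≠ ⊤) {μ : ℝ} (hμ : 0 < μ) (x : H) :
    ∃ p, f p ≠ ⊤ ∧ μ • (x - p) ∈ subdiff f p := by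
  obtain ⟨p, hp, hmin⟩ :=
    exists_forall_toReal_add_le hbot hlsc hconv hnonneg hdom (half_pos hμ) x
  refine ⟨p, hp, fun y => ?_⟩
  by_cases hy : f y = ⊤
  · simp [hy]
  have := hconv.add_inner_le_of_forall_le_add_mul_sq_norm_sub hp hmin hy
  rw [← EReal.coe_toReal hp (hbot p), ← EReal.coe_toReal hy (hbot y), real_inner_smul_left]
  exact_mod_cast (by linarith : (f p).toReal + μ * ⟪x - p, y - p⟫ ≤ (f y).toReal)

/-- The iterates of the proximal point method `u (k + 1) = argmin (f + μ/2 ‖· - u k‖²)`,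
through their optimality condition. -/
def IsProximalSeq (f : H → EReal) (μ : ℝ) (u : ℕ → H) : Prop :=
  ∀ k, f (u k) ≠ ⊤ ∧ μ • (u k - u (k + 1)) ∈ subdiff f (u (k + 1))

theorem exists_isProximalSeq (hbot : ∀ x, f x ≠ ⊥) (hlsc : LowerSemicontinuous f)
    (hconv : ConvexOn ℝ {y | f y ≠ ⊤} fun y => (f y).toReal) (hnonneg : ∀ y, 0 ≤ f y)
    {μ : ℝ} (hμ : 0 < μ) {x : H} (hx : f x ≠ ⊤) : ∃ u, u 0 = x ∧ IsProximalSeq f μ u := by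
  choose P hP hPsub using exists_smul_sub_mem_subdiff hbot hlsc hconv hnonneg ⟨x, hx⟩ hμ
  refine ⟨fun k => P^[k] x, rfl, fun k => ⟨?_, ?_⟩⟩
  · cases k with
    | zero => exact hx
    | succ k => simpa only [Function.iterate_succ_apply'] using hP _
  · simpa only [Function.iterate_succ_apply'] using hPsub _

namespace IsProximalSeq

variable {μ : ℝ} {u : ℕ → H}

omit [CompleteSpace H] in
theorem toReal_succ_add_le (hu : IsProximalSeq f μ u) (hbot : ∀ x, f x ≠ ⊥) {z : H}
    (hz : f z ≠ ⊤) (k : ℕ) :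
    (f (u (k + 1))).toReal + μ / 2 * (dist (u k) (u (k + 1)) ^ 2 + ‖u (k + 1) - z‖ ^ 2) ≤
      (f z).toReal + μ / 2 * ‖u k - z‖ ^ 2 := by
  simpa only [dist_eq_norm] using
    toReal_add_le_of_smul_sub_mem_subdiff hbot (hu k).2 (hu (k + 1)).1 hz

omit [CompleteSpace H] in
theorem toReal_succ_add_mul_dist_sq_le (hu : IsProximalSeq f μ u) (hbot : ∀ x, f x ≠ ⊥)
    (k : ℕ) : (f (u (k + 1))).toReal + μ * dist (u k) (u (k + 1)) ^ 2 ≤ (f (u k)).toReal := by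
  have := hu.toReal_succ_add_le hbot (hu k).1 k
  rw [sub_self, norm_zero, ← dist_eq_norm, dist_comm (u (k + 1))] at this
  linarith

omit [CompleteSpace H] in
theorem toReal_succ_add_sq_norm_sub_le (hu : IsProximalSeq f μ u) (hbot : ∀ x, f x ≠ ⊥)
    (hμ : 0 ≤ μ) {xbar : H} (hxbar : f xbar = 0) (k : ℕ) :
    (f (u (k + 1))).toReal + μ / 2 * ‖u (k + 1) - xbar‖ ^ 2 ≤ μ / 2 * ‖u k - xbar‖ ^ 2 := by
  have := hu.toReal_succ_add_le hbot (hxbar ▸ EReal.zero_ne_top) k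
  rw [hxbar, EReal.toReal_zero] at this
  nlinarith [sq_nonneg (dist (u k) (u (k + 1)))]

omit [CompleteSpace H] in
theorem norm_sub_le (hu : IsProximalSeq f μ u) (hbot : ∀ x, f x ≠ ⊥)
    (hnonneg : ∀ y, 0 ≤ f y) (hμ : 0 < μ) {xbar : H} (hxbar : f xbar = 0) (k : ℕ) :
    ‖u k - xbar‖ ≤ ‖u 0 - xbar‖ := by
  refine antitone_nat_of_succ_le (f := fun k => ‖u k - xbar‖) (fun k => ?_) (Nat.zero_le k)
  refine (pow_le_pow_iff_left₀ (norm_nonneg _) (norm_nonneg _) two_ne_zero).1 ?_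
  nlinarith [hu.toReal_succ_add_sq_norm_sub_le hbot hμ.le hxbar k,
    EReal.toReal_nonneg (hnonneg (u (k + 1)))]

omit [CompleteSpace H] in
theorem mem_argminSet_of_tendsto (hu : IsProximalSeq f μ u) (hbot : ∀ x, f x ≠ ⊥)
    (hlsc : LowerSemicontinuous f) (hnonneg : ∀ y, 0 ≤ f y) (hμ : 0 ≤ μ) {xbar : H}
    (hxbar : f xbar = 0) {p : H} (hp : Tendsto u atTop (𝓝 p)) : p ∈ argminSet f := by
  have hval : Tendsto (fun k => (f (u k)).toReal) atTop (𝓝 0) :=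
    tendsto_atTop_zero_of_add_le (fun k => EReal.toReal_nonneg (hnonneg _))
      (e := fun k => μ / 2 * ‖u k - xbar‖ ^ 2) (fun k => by positivity)
      (hu.toReal_succ_add_sq_norm_sub_le hbot hμ hxbar)
  have hfp : f p ≤ ((0 : ℝ) : EReal) := hlsc.le_of_tendsto hp <| by
    simpa only [Function.comp_def, EReal.coe_toReal (hu _).1 (hbot _)] using
      (continuous_coe_real_ereal.tendsto 0).comp hval
  exact fun y => (hfp.trans_eq EReal.coe_zero).trans (hnonneg y)

omit [CompleteSpace H] in
theorem sum_range_dist_le (hu : IsProximalSeq f μ u) (hbot : ∀ x, f x ≠ ⊥)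
    (hnonneg : ∀ y, 0 ≤ f y) (hμ : 0 < μ) {xbar : H} (hxbar : f xbar = 0)
    {r0 ρ : ℝ} {φ φ' : ℝ → ℝ} (hφderiv : ∀ s ∈ Ioo (0 : ℝ) r0, HasDerivAt φ (φ' s) s)
    (hφconc : ConcaveOn ℝ (Ico 0 r0) φ) (hφ0 : φ 0 = 0) (hφ'pos : ∀ s ∈ Ioo (0 : ℝ) r0, 0 < φ' s)
    (hKL : ∀ x ∈ closedBall xbar ρ, 0 < f x → f x < (r0 : EReal) →
      ∀ v ∈ subdiff f x, 1 ≤ φ' ((f x).toReal) * ‖v‖)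
    (hu0 : u 0 ∈ closedBall xbar ρ) (hu0r : (f (u 0)).toReal < r0) (N : ℕ) :
    ∑ k ∈ Finset.range N, dist (u k) (u (k + 1)) ≤
      2 * dist (u 0) (u 1) + φ (f (u 0)).toReal := by
  set a : ℕ → ℝ := fun k => (f (u k)).toReal
  have hfa k : f (u k) = a k := (EReal.coe_toReal (hu k).1 (hbot _)).symm
  have ha k : 0 ≤ a k := EReal.toReal_nonneg (hnonneg _)
  have hdesc := hu.toReal_succ_add_mul_dist_sq_le hbot
  have hlt k : a k < r0 :=
    (antitone_nat_of_succ_le (fun k => by nlinarith [hdesc k]) (Nat.zero_le k)).trans_lt hu0r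
  have hKL' k (hak : 0 < a (k + 1)) : 1 ≤ φ' (a (k + 1)) * (μ * dist (u k) (u (k + 1))) := by
    have hball : u (k + 1) ∈ closedBall xbar ρ := by
      rw [mem_closedBall, dist_eq_norm] at hu0 ⊢
      exact (hu.norm_sub_le hbot hnonneg hμ hxbar _).trans hu0
    have := hKL _ hball (by rw [hfa]; exact_mod_cast hak)
      (by rw [hfa]; exact_mod_cast hlt (k + 1)) _ (hu k).2
    rwa [norm_smul, Real.norm_of_nonneg hμ.le, ← dist_eq_norm] at this
  have hφmono := hφconc.monotoneOn_Ico_of_hasDerivAt_pos hφderiv hφ'pos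
  have hφa k : 0 ≤ φ (a k) :=
    hφ0 ▸ hφmono ⟨le_rfl, (ha k).trans_lt (hlt k)⟩ ⟨ha k, hlt k⟩ (ha k)
  refine (sum_range_le_of_two_mul_add_le (fun _ => dist_nonneg) hφa (fun k =>
    two_mul_add_le_of_concaveOn hφconc hφderiv hμ (ha _) (hlt _) dist_nonneg (hdesc _)
      (hKL' k)) N).trans ?_
  gcongr
  exact hφmono ⟨ha 1, hlt 1⟩ ⟨ha 0, hlt 0⟩ (by nlinarith [hdesc 0])

theorem infDist_argminSet_le (hu : IsProximalSeq f μ u) (hbot : ∀ x, f x ≠ ⊥)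
    (hlsc : LowerSemicontinuous f) (hnonneg : ∀ y, 0 ≤ f y) (hμ : 0 < μ) {xbar : H}
    (hxbar : f xbar = 0) {r0 ρ : ℝ} {φ φ' : ℝ → ℝ}
    (hφderiv : ∀ s ∈ Ioo (0 : ℝ) r0, HasDerivAt φ (φ' s) s)
    (hφconc : ConcaveOn ℝ (Ico 0 r0) φ) (hφ0 : φ 0 = 0) (hφ'pos : ∀ s ∈ Ioo (0 : ℝ) r0, 0 < φ' s)
    (hKL : ∀ x ∈ closedBall xbar ρ, 0 < f x → f x < (r0 : EReal) →
      ∀ v ∈ subdiff f x, 1 ≤ φ' ((f x).toReal) * ‖v‖)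
    (hu0 : u 0 ∈ closedBall xbar ρ) (hu0r : (f (u 0)).toReal < r0) :
    infDist (u 0) (argminSet f) ≤ 2 * √((f (u 0)).toReal / μ) + φ (f (u 0)).toReal := by
  have hsum := hu.sum_range_dist_le hbot hnonneg hμ hxbar hφderiv hφconc hφ0 hφ'pos hKL hu0 hu0r
  have hsummable := summable_of_sum_range_le (fun _ => dist_nonneg) hsum
  obtain ⟨p, hp⟩ := cauchySeq_tendsto_of_complete (cauchySeq_of_summable_dist hsummable)
  have hd0 : dist (u 0) (u 1) ≤ √((f (u 0)).toReal / μ) := by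
    refine Real.le_sqrt_of_sq_le ((le_div_iff₀' hμ).2 ?_)
    linarith [hu.toReal_succ_add_mul_dist_sq_le hbot 0, EReal.toReal_nonneg (hnonneg (u 1))]
  calc infDist (u 0) (argminSet f)
      ≤ dist (u 0) p :=
        infDist_le_dist_of_mem (hu.mem_argminSet_of_tendsto hbot hlsc hnonneg hμ.le hxbar hp)
    _ ≤ ∑' k, dist (u k) (u (k + 1)) :=
      dist_le_tsum_of_dist_le_of_tendsto₀ _ (fun _ => le_rfl) hsummable hp
    _ ≤ 2 * dist (u 0) (u 1) + φ (f (u 0)).toReal :=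
      Real.tsum_le_of_sum_range_le (fun _ => dist_nonneg) hsum
    _ ≤ 2 * √((f (u 0)).toReal / μ) + φ (f (u 0)).toReal := by gcongr

end IsProximalSeq

end Prox

theorem stmt0_general (f : H → EReal)
    (hbot : ∀ x, f x ≠ ⊥)
    (hlsc : LowerSemicontinuous f)
    (hconv : ∀ x y : H, ∀ t : ℝ, 0 < t → t < 1 →
      f (t • x + (1 - t) • y) ≤ (t : EReal) * f x + ((1 - t : ℝ) : EReal) * f y)
    (hmin : ∃ z, z ∈ argminSet f ∧ f z = 0)
    (r0 ρ : ℝ)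
    (φ φ' : ℝ → ℝ)
    (hφderiv : ∀ s ∈ Ioo (0 : ℝ) r0, HasDerivAt φ (φ' s) s)
    (hφconc : ConcaveOn ℝ (Ico 0 r0) φ)
    (hφ0 : φ 0 = 0)
    (hφ'pos : ∀ s ∈ Ioo (0 : ℝ) r0, 0 < φ' s)
    (xbar : H) (hxbar : xbar ∈ argminSet f)
    (hKL : ∀ x ∈ closedBall xbar ρ, 0 < f x → f x < (r0 : EReal) →
      ∀ u ∈ subdiff f x, 1 ≤ φ' ((f x).toReal) * ‖u‖) :
    ∀ x ∈ closedBall xbar ρ, 0 < f x → f x < (r0 : EReal) →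
      Metric.infDist x (argminSet f) ≤ φ ((f x).toReal) := by
  intro x hx _ hxr
  obtain ⟨z, hz, hz0⟩ := hmin
  have hnonneg : ∀ y, 0 ≤ f y := fun y => hz0 ▸ hz y
  have hfxbar : f xbar = 0 := le_antisymm (hz0 ▸ hxbar z) (hnonneg xbar)
  have hxtop : f x ≠ ⊤ := hxr.ne_top
  have hxr' : (f x).toReal < r0 := by
    rwa [← EReal.coe_toReal hxtop (hbot x), EReal.coe_lt_coe_iff] at hxr
  have hbound : ∀ μ > 0, infDist x (argminSet f) ≤ 2 * √((f x).toReal / μ) + φ (f x).toReal := by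
    intro μ hμ
    obtain ⟨u, rfl, hu⟩ :=
      exists_isProximalSeq hbot hlsc (convexOn_toReal_of_ne_top hbot hconv) hnonneg hμ hxtop
    exact hu.infDist_argminSet_le hbot hlsc hnonneg hμ hfxbar hφderiv hφconc hφ0 hφ'pos hKL hx hxr'
  have hlim : Tendsto (fun μ => 2 * √((f x).toReal / μ) + φ (f x).toReal) atTop
      (𝓝 (φ (f x).toReal)) := by
    simpa using ((tendsto_const_nhds.div_atTop tendsto_id).sqrt.const_mul 2).add_const
      (φ (f x).toReal)
  exact ge_of_tendsto hlim ((eventually_gt_atTop 0).mono hbound)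

/-- **Theorem 3.2 (i)**: for a proper lower-semicontinuous convex function with
`min f = 0`, the Kurdyka–Łojasiewicz inequality on `B(x̄,ρ) ∩ [0 < f < r₀]`
implies the error bound `dist(x, argmin f) ≤ φ(f(x))` on the same set.
The KL inequality `φ'(f(x))·‖∂⁰f(x)‖ ≥ 1` (with `‖∂⁰f(x)‖ = dist(0, ∂f(x))`,
equal to `+∞` when `∂f(x) = ∅`) is expressed equivalently as
`φ'(f(x))·‖u‖ ≥ 1` for every `u ∈ ∂f(x)`. -/
theorem stmt0 (f : H → EReal)
    (hbot : ∀ x, f x ≠ ⊥) (htop : ∃ x, f x ≠ ⊤)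
    (hlsc : LowerSemicontinuous f)
    (hconv : ∀ x y : H, ∀ t : ℝ, 0 < t → t < 1 →
      f (t • x + (1 - t) • y) ≤ (t : EReal) * f x + ((1 - t : ℝ) : EReal) * f y)
    (hmin : ∃ z, z ∈ argminSet f ∧ f z = 0)
    (r0 ρ : ℝ) (hr0 : 0 < r0) (hρ : 0 < ρ)
    (φ φ' : ℝ → ℝ)
    (hφcont : ContinuousOn φ (Ico 0 r0))
    (hφderiv : ∀ s ∈ Ioo (0 : ℝ) r0, HasDerivAt φ (φ' s) s)
    (hφ'cont : ContinuousOn φ' (Ioo 0 r0))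
    (hφconc : ConcaveOn ℝ (Ico 0 r0) φ)
    (hφ0 : φ 0 = 0)
    (hφ'pos : ∀ s ∈ Ioo (0 : ℝ) r0, 0 < φ' s)
    (xbar : H) (hxbar : xbar ∈ argminSet f)
    (hKL : ∀ x ∈ closedBall xbar ρ, 0 < f x → f x < (r0 : EReal) →
      ∀ u ∈ subdiff f x, 1 ≤ φ' ((f x).toReal) * ‖u‖) :
    ∀ x ∈ closedBall xbar ρ, 0 < f x → f x < (r0 : EReal) →
      Metric.infDist x (argminSet f) ≤ φ ((f x).toReal) :=
  stmt0_general f hbot hlsc hconv hmin r0 ρ φ φ' hφderiv hφconc hφ0 hφ'pos xbar hxbar hKL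
end
end

section
/- Let r0 > 0, ρ > 0, c > 0, φ ∈ 𝒦(0,r0) and x̄ ∈ argmin f. Assume φ has moderate behavior near the origin, i.e. s·φ′(s) ≥ c·φ(s) for all s ∈ (0,r0). If φ(f(x)) ≥ dist(x, S) for every x ∈ B(x̄,ρ) with 0 < f(x) < r0, then φ′(f(x))·‖∂⁰f(x)‖ ≥ c for every x ∈ B(x̄,ρ) with 0 < f(x) < r0. (Theorem 3.2(ii): an error bound with moderate residual function implies the Kurdyka–Łojasiewicz inequality.) -/
open Metric Set Filter
open scoped RealInnerProductSpace

noncomputable section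

variable {H : Type*} [NormedAddCommGroup H] [InnerProductSpace ℝ H] [CompleteSpace H]

/-!
For `u ∈ ∂f(x)` and `z ∈ argmin f`, the subgradient inequality gives
`f(x) ≤ ⟪u, x - z⟫ ≤ ‖u‖ · dist(x, z)`, hence `f(x) ≤ ‖u‖ · dist(x, S)`. The error bound and the
moderate behavior of `φ` then give `c · f(x) ≤ c · ‖u‖ · φ(f(x)) ≤ ‖u‖ · f(x) · φ'(f(x))`, and
dividing by `f(x) > 0` yields the KL inequality.
-/

theorem Metric.le_mul_infDist_of_forall_le_mul_dist {α : Type*} [PseudoMetricSpace α]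
    {s : Set α} {x : α} {a k : ℝ} (hs : s.Nonempty) (hk : 0 ≤ k)
    (h : ∀ y ∈ s, a ≤ k * dist x y) : a ≤ k * infDist x s := by
  rcases hk.eq_or_lt with rfl | hk
  · obtain ⟨y, hy⟩ := hs
    simpa using h y hy
  · rw [← div_le_iff₀' hk]
    exact (le_infDist hs).2 fun y hy => (div_le_iff₀' hk).2 (h y hy)

section Subdifferential

variable {E : Type*} [NormedAddCommGroup E] [InnerProductSpace ℝ E] {f : E → EReal} {x z u : E}

theorem toReal_le_norm_mul_dist_of_mem_subdiff (hu : u ∈ subdiff f x) (hfz : f z ≤ 0) :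
    (f x).toReal ≤ ‖u‖ * dist x z := by
  have hsub : f x + ((⟪u, z - x⟫ : ℝ) : EReal) ≤ 0 := (hu z).trans hfz
  by_cases hbot : f x = ⊥
  · rw [hbot, EReal.toReal_bot]
    positivity
  have htop : f x ≠ ⊤ := by
    rintro htop
    simp [htop, EReal.top_add_coe] at hsub
  rw [← EReal.coe_toReal htop hbot, ← EReal.coe_add] at hsub
  have hreal : (f x).toReal + ⟪u, z - x⟫ ≤ 0 := by exact_mod_cast hsub
  have hflip : ⟪u, z - x⟫ = -⟪u, x - z⟫ := by
    rw [← inner_neg_right, neg_sub]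
  calc (f x).toReal ≤ ⟪u, x - z⟫ := by linarith
    _ ≤ ‖u‖ * ‖x - z‖ := real_inner_le_norm u (x - z)
    _ = ‖u‖ * dist x z := by rw [dist_eq_norm]

theorem toReal_le_norm_mul_infDist_argminSet (hu : u ∈ subdiff f x)
    (hmin : ∃ z, z ∈ argminSet f ∧ f z = 0) :
    (f x).toReal ≤ ‖u‖ * infDist x (argminSet f) := by
  obtain ⟨z₀, hz₀, hfz₀⟩ := hmin
  refine le_mul_infDist_of_forall_le_mul_dist ⟨z₀, hz₀⟩ (norm_nonneg u) fun z hz => ?_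
  exact toReal_le_norm_mul_dist_of_mem_subdiff hu (hfz₀ ▸ hz z₀)

end Subdifferential

theorem stmt1_general (f : H → EReal)
    (hbot : ∀ x, f x ≠ ⊥)
    (hmin : ∃ z, z ∈ argminSet f ∧ f z = 0)
    (r0 ρ c : ℝ) (hc : 0 < c)
    (φ φ' : ℝ → ℝ)
    (hmod : ∀ s ∈ Ioo (0 : ℝ) r0, c * φ s ≤ s * φ' s)
    (xbar : H)
    (hEB : ∀ x ∈ closedBall xbar ρ, 0 < f x → f x < (r0 : EReal) →
      Metric.infDist x (argminSet f) ≤ φ ((f x).toReal)) :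
    ∀ x ∈ closedBall xbar ρ, 0 < f x → f x < (r0 : EReal) →
      ∀ u ∈ subdiff f x, c ≤ φ' ((f x).toReal) * ‖u‖ := by
  intro x hx hpos hlt u hu
  have hfx : ((f x).toReal : EReal) = f x :=
    EReal.coe_toReal (hlt.trans (EReal.coe_lt_top r0)).ne (hbot x)
  set r := (f x).toReal
  have hr : r ∈ Ioo 0 r0 := ⟨by exact_mod_cast hfx ▸ hpos, by exact_mod_cast hfx ▸ hlt⟩
  have hsub := toReal_le_norm_mul_infDist_argminSet hu hmin
  refine le_of_mul_le_mul_left ?_ hr.1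
  calc r * c = c * r := mul_comm r c
    _ ≤ c * (‖u‖ * φ r) := by
      gcongr
      exact hsub.trans (mul_le_mul_of_nonneg_left (hEB x hx hpos hlt) (norm_nonneg u))
    _ = ‖u‖ * (c * φ r) := by ring
    _ ≤ ‖u‖ * (r * φ' r) := mul_le_mul_of_nonneg_left (hmod r hr) (norm_nonneg u)
    _ = r * (φ' r * ‖u‖) := by ring

/-- **Theorem 3.2 (ii)**: for a proper lower-semicontinuous convex function with
`min f = 0`, an error bound `φ(f(x)) ≥ dist(x, argmin f)` on `B(x̄,ρ) ∩ [0 < f < r₀]`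
with a residual function `φ` of moderate behavior (`s·φ'(s) ≥ c·φ(s)` on `(0,r₀)`)
implies the Kurdyka–Łojasiewicz inequality `φ'(f(x))·‖∂⁰f(x)‖ ≥ c` on the same set
(expressed equivalently as `φ'(f(x))·‖u‖ ≥ c` for every `u ∈ ∂f(x)`). -/
theorem stmt1 (f : H → EReal)
    (hbot : ∀ x, f x ≠ ⊥) (htop : ∃ x, f x ≠ ⊤)
    (hlsc : LowerSemicontinuous f)
    (hconv : ∀ x y : H, ∀ t : ℝ, 0 < t → t < 1 →
      f (t • x + (1 - t) • y) ≤ (t : EReal) * f x + ((1 - t : ℝ) : EReal) * f y)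
    (hmin : ∃ z, z ∈ argminSet f ∧ f z = 0)
    (r0 ρ c : ℝ) (hr0 : 0 < r0) (hρ : 0 < ρ) (hc : 0 < c)
    (φ φ' : ℝ → ℝ)
    (hφcont : ContinuousOn φ (Ico 0 r0))
    (hφderiv : ∀ s ∈ Ioo (0 : ℝ) r0, HasDerivAt φ (φ' s) s)
    (hφ'cont : ContinuousOn φ' (Ioo 0 r0))
    (hφconc : ConcaveOn ℝ (Ico 0 r0) φ)
    (hφ0 : φ 0 = 0)
    (hφ'pos : ∀ s ∈ Ioo (0 : ℝ) r0, 0 < φ' s)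
    (hmod : ∀ s ∈ Ioo (0 : ℝ) r0, c * φ s ≤ s * φ' s)
    (xbar : H) (hxbar : xbar ∈ argminSet f)
    (hEB : ∀ x ∈ closedBall xbar ρ, 0 < f x → f x < (r0 : EReal) →
      Metric.infDist x (argminSet f) ≤ φ ((f x).toReal)) :
    ∀ x ∈ closedBall xbar ρ, 0 < f x → f x < (r0 : EReal) →
      ∀ u ∈ subdiff f x, c ≤ φ' ((f x).toReal) * ‖u‖ :=
  stmt1_general f hbot hmin r0 ρ c hc φ φ' hmod xbar hEB
end
end

section
/- Extrapolation of a Hölderian error bound to a global Hölder-type error bound: let γ > 0, p ≥ 1 and r0 > 0, and suppose f(x) ≥ γ·dist(x,S)^p for every x with f(x) ≤ r0. Then f(x) ≥ r0^{(p−1)/p}·γ^{1/p}·dist(x,S) for every x ∈ dom f with f(x) > r0; consequently, setting γ0 = γ^{1/p}·min{1, r0^{(p−1)/p}}, one has f(x) + f(x)^{1/p} ≥ γ0·dist(x,S) for all x ∈ dom f. -/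
/-!
Let `x` have `f x = R > r₀` and put `t = r₀ / R`. For every minimizer `z`, convexity gives
`f (t • x + (1 - t) • z) ≤ t R = r₀`, so the local error bound places that point within
`ρ = (r₀ / γ)^(1/p)` of `S`. Since it lies at distance `(1 - t) ‖x - z‖` from `x`, taking the
infimum over `z` yields `t · dist(x, S) ≤ ρ`, which rearranges to the linear bound. The global
bound follows by splitting into `f x ≤ r₀` (Hölder part) and `f x > r₀` (linear part).
-/

open Metric Set Filter
open scoped RealInnerProductSpace

noncomputable section

variable {H : Type*} [NormedAddCommGroup H] [InnerProductSpace ℝ H] [CompleteSpace H]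

section Segment

variable {E : Type*} [NormedAddCommGroup E] [NormedSpace ℝ E]

theorem mul_infDist_le_of_forall_infDist_convexComb_le {s : Set E} (hs : s.Nonempty) {x : E}
    {t ρ : ℝ} (ht : t < 1) (h : ∀ z ∈ s, infDist (t • x + (1 - t) • z) s ≤ ρ) :
    t * infDist x s ≤ ρ := by
  have hdist : ∀ z ∈ s, infDist x s - ρ ≤ (1 - t) * dist x z := fun z hz => by
    have hxy : dist x (t • x + (1 - t) • z) = (1 - t) * dist x z := by
      rw [dist_eq_norm, dist_eq_norm,
        show x - (t • x + (1 - t) • z) = (1 - t) • (x - z) by module,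
        norm_smul, Real.norm_of_nonneg (by linarith)]
    have := infDist_le_infDist_add_dist (x := x) (y := t • x + (1 - t) • z) (s := s)
    linarith [h z hz]
  have hle : (infDist x s - ρ) / (1 - t) ≤ infDist x s :=
    (le_infDist hs).2 fun z hz => (div_le_iff₀' (by linarith)).2 (hdist z hz)
  rw [div_le_iff₀ (by linarith)] at hle
  linarith

end Segment

namespace Real

theorem rpow_one_div_mul_le_of_mul_rpow_le {γ d r p : ℝ} (hγ : 0 ≤ γ) (hd : 0 ≤ d) (hp : 0 < p)
    (h : γ * d ^ p ≤ r) : γ ^ (1 / p) * d ≤ r ^ (1 / p) :=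
  calc γ ^ (1 / p) * d = (γ * d ^ p) ^ (1 / p) := by
        rw [mul_rpow hγ (rpow_nonneg hd p), one_div, rpow_rpow_inv hd hp.ne']
    _ ≤ r ^ (1 / p) := rpow_le_rpow (by positivity) h (by positivity)

theorem rpow_sub_one_div_mul_rpow_one_div {r p : ℝ} (hr : 0 ≤ r) (hp : p ≠ 0) :
    r ^ ((p - 1) / p) * r ^ (1 / p) = r := by
  have hsum : (p - 1) / p + 1 / p = 1 := by field_simp; ring
  rw [← rpow_add' hr (by rw [hsum]; norm_num), hsum, rpow_one]

end Real

theorem mul_infDist_argminSet_le_toReal_of_lt {E : Type*} [NormedAddCommGroup E]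
    [InnerProductSpace ℝ E] {f : E → EReal}
    (hconv : ∀ x y : E, ∀ t : ℝ, 0 < t → t < 1 →
      f (t • x + (1 - t) • y) ≤ (t : EReal) * f x + ((1 - t : ℝ) : EReal) * f y)
    (hzero : ∀ z ∈ argminSet f, f z = 0) (hne : (argminSet f).Nonempty)
    {γ p r0 : ℝ} (hγ : 0 < γ) (hp : 0 < p) (hr0 : 0 < r0)
    (hEB : ∀ x, f x ≤ (r0 : EReal) →
      ((γ * infDist x (argminSet f) ^ p : ℝ) : EReal) ≤ f x)
    {x : E} (hxt : f x ≠ ⊤) (hxr : (r0 : EReal) < f x) :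
    r0 ^ ((p - 1) / p) * γ ^ (1 / p) * infDist x (argminSet f) ≤ (f x).toReal := by
  set S := argminSet f
  set R := (f x).toReal
  have hfx : f x = R := (EReal.coe_toReal hxt hxr.ne_bot).symm
  have hRr : r0 < R := by rw [hfx] at hxr; exact_mod_cast hxr
  have hR : 0 < R := hr0.trans hRr
  set ρ := r0 ^ (1 / p) / γ ^ (1 / p)
  have hnear : ∀ y, f y ≤ r0 → infDist y S ≤ ρ := fun y hy => by
    have hEBy : γ * infDist y S ^ p ≤ r0 := by exact_mod_cast (hEB y hy).trans hy
    rw [le_div_iff₀' (by positivity)]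
    exact Real.rpow_one_div_mul_le_of_mul_rpow_le hγ.le infDist_nonneg hp hEBy
  have hsegment : r0 / R * infDist x S ≤ ρ := by
    refine mul_infDist_le_of_forall_infDist_convexComb_le hne ((div_lt_one hR).2 hRr)
      fun z hz => hnear _ ?_
    calc f ((r0 / R) • x + (1 - r0 / R) • z)
        ≤ ((r0 / R : ℝ) : EReal) * f x + ((1 - r0 / R : ℝ) : EReal) * f z :=
          hconv x z _ (by positivity) ((div_lt_one hR).2 hRr)
      _ = r0 := by
          rw [hzero z hz, hfx, mul_zero, add_zero, ← EReal.coe_mul, div_mul_cancel₀ _ hR.ne']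
  set c := r0 ^ ((p - 1) / p) * γ ^ (1 / p)
  have hconst : c * ρ = r0 := by
    rw [mul_assoc, mul_div_cancel₀ _ (by positivity),
      Real.rpow_sub_one_div_mul_rpow_one_div hr0.le hp.ne']
  have hscaled : r0 * infDist x S ≤ ρ * R := by
    rwa [div_mul_eq_mul_div, div_le_iff₀ hR] at hsegment
  refine le_of_mul_le_mul_left ?_ hr0
  calc r0 * (c * infDist x S) = c * (r0 * infDist x S) := by ring
    _ ≤ c * (ρ * R) := by gcongr
    _ = r0 * R := by rw [← mul_assoc, hconst]

theorem stmt3_general (f : H → EReal)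
    (hconv : ∀ x y : H, ∀ t : ℝ, 0 < t → t < 1 →
      f (t • x + (1 - t) • y) ≤ (t : EReal) * f x + ((1 - t : ℝ) : EReal) * f y)
    (hmin : ∃ z, z ∈ argminSet f ∧ f z = 0)
    (γ p r0 : ℝ) (hγ : 0 < γ) (hp : 1 ≤ p) (hr0 : 0 < r0)
    (hEB : ∀ x, f x ≤ (r0 : EReal) →
      ((γ * Metric.infDist x (argminSet f) ^ p : ℝ) : EReal) ≤ f x) :
    (∀ x, f x ≠ ⊤ → (r0 : EReal) < f x →
      r0 ^ ((p - 1) / p) * γ ^ (1 / p) * Metric.infDist x (argminSet f)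
        ≤ (f x).toReal) ∧
    (∀ x, f x ≠ ⊤ →
      γ ^ (1 / p) * min 1 (r0 ^ ((p - 1) / p)) * Metric.infDist x (argminSet f)
        ≤ (f x).toReal + (f x).toReal ^ (1 / p)) := by
  obtain ⟨z₀, hz₀S, hz₀⟩ := hmin
  have hnonneg : ∀ y, 0 ≤ f y := fun y => hz₀ ▸ hz₀S y
  have hzero : ∀ z ∈ argminSet f, f z = 0 := fun z hz => le_antisymm (hz₀ ▸ hz z₀) (hnonneg z)
  have hp₀ : 0 < p := one_pos.trans_le hp
  have hfar := fun x (hxt : f x ≠ ⊤) hxr =>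
    mul_infDist_argminSet_le_toReal_of_lt hconv hzero ⟨z₀, hz₀S⟩ hγ hp₀ hr0 hEB hxt hxr
  refine ⟨hfar, fun x hxt => ?_⟩
  have hR : 0 ≤ (f x).toReal := EReal.toReal_nonneg (hnonneg x)
  have hd : 0 ≤ infDist x (argminSet f) := infDist_nonneg
  rcases le_or_gt (f x) r0 with hle | hlt
  · have hEBx : γ * infDist x (argminSet f) ^ p ≤ (f x).toReal := by
      rw [← EReal.coe_le_coe_iff, EReal.coe_toReal hxt (ne_bot_of_le_ne_bot EReal.zero_ne_bot (hnonneg x))]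
      exact hEB x hle
    calc γ ^ (1 / p) * min 1 (r0 ^ ((p - 1) / p)) * infDist x (argminSet f)
        ≤ γ ^ (1 / p) * 1 * infDist x (argminSet f) := by gcongr; exact min_le_left _ _
      _ ≤ (f x).toReal ^ (1 / p) := by
          rw [mul_one]
          exact Real.rpow_one_div_mul_le_of_mul_rpow_le hγ.le hd hp₀ hEBx
      _ ≤ _ := le_add_of_nonneg_left hR
  · calc γ ^ (1 / p) * min 1 (r0 ^ ((p - 1) / p)) * infDist x (argminSet f)
        ≤ r0 ^ ((p - 1) / p) * γ ^ (1 / p) * infDist x (argminSet f) := by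
          rw [mul_comm (γ ^ (1 / p))]; gcongr; exact min_le_right _ _
      _ ≤ (f x).toReal := hfar x hxt hlt
      _ ≤ _ := le_add_of_nonneg_right (by positivity)

/-- **Extrapolation of a Hölderian error bound to a global Hölder-type error
bound**: if `f` is proper lower-semicontinuous convex with `min f = 0` and
`f(x) ≥ γ·dist(x,S)^p` whenever `f(x) ≤ r₀`, then
`f(x) ≥ r₀^((p-1)/p)·γ^(1/p)·dist(x,S)` for every `x ∈ dom f` with `f(x) > r₀`,
and consequently, with `γ₀ = γ^(1/p)·min{1, r₀^((p-1)/p)}`,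
`f(x) + f(x)^(1/p) ≥ γ₀·dist(x,S)` for all `x ∈ dom f`. -/
theorem stmt3 (f : H → EReal)
    (hbot : ∀ x, f x ≠ ⊥) (htop : ∃ x, f x ≠ ⊤)
    (hlsc : LowerSemicontinuous f)
    (hconv : ∀ x y : H, ∀ t : ℝ, 0 < t → t < 1 →
      f (t • x + (1 - t) • y) ≤ (t : EReal) * f x + ((1 - t : ℝ) : EReal) * f y)
    (hmin : ∃ z, z ∈ argminSet f ∧ f z = 0)
    (γ p r0 : ℝ) (hγ : 0 < γ) (hp : 1 ≤ p) (hr0 : 0 < r0)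
    (hEB : ∀ x, f x ≤ (r0 : EReal) →
      ((γ * Metric.infDist x (argminSet f) ^ p : ℝ) : EReal) ≤ f x) :
    (∀ x, f x ≠ ⊤ → (r0 : EReal) < f x →
      r0 ^ ((p - 1) / p) * γ ^ (1 / p) * Metric.infDist x (argminSet f)
        ≤ (f x).toReal) ∧
    (∀ x, f x ≠ ⊤ →
      γ ^ (1 / p) * min 1 (r0 ^ ((p - 1) / p)) * Metric.infDist x (argminSet f)
        ≤ (f x).toReal + (f x).toReal ^ (1 / p)) :=
  stmt3_general f hconv hmin γ p r0 hγ hp hr0 hEB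
end
end

section
/- Regularity of an intersection of convex sets with nonempty-interior intersection: let m ≥ 2 and let C₁, …, C_m be closed convex subsets of H. Suppose there exist x̄ ∈ H and R > 0 such that the closed ball B(x̄, R) is contained in ⋂_{i=1}^m C_i. Then for every x ∈ H, dist(x, ⋂_{i=1}^m C_i) ≤ (1 + 2‖x − x̄‖/R)^{m−1} · max{dist(x, C_i) : i = 1, …, m}. (Proposition 3.9.) -/
/-!
For two sets, let `p` be the projection of `x` onto the closed convex set `D`; as `x̄ ∈ D`,
`‖p - x̄‖ ≤ ‖x - x̄‖`. Given `c ∈ C`, the point `w = x̄ + (R / ‖p - c‖) • (p - c)` lies in the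
ball, hence in `C`, and the convex combination of `c` and `w` with weight
`t = ‖p - c‖ / (‖p - c‖ + R)` equals the combination of `p` and `x̄` with the same weight. That
point lies in `C ∩ D` at distance `t ‖p - x̄‖ ≤ ‖p - c‖ ‖x - x̄‖ / R` from `p`, whence
`d(x, C ∩ D) ≤ d(x, D) + (d(x, C) + d(x, D)) ‖x - x̄‖ / R`. Adding the sets one at a time
multiplies the bound by `1 + 2 ‖x - x̄‖ / R` at each step.
-/

open Metric Set AffineMap

section Normed

variable {E : Type*} [NormedAddCommGroup E] [NormedSpace ℝ E]
  {C D : Set E} {xbar : E} {R : ℝ}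

theorem Convex.exists_lineMap_mem_of_closedBall_subset (hC : Convex ℝ C) (hR : 0 < R)
    (hball : closedBall xbar R ⊆ C) {c : E} (hc : c ∈ C) (p : E) :
    ∃ t ∈ Icc (0 : ℝ) 1, t ≤ dist p c / R ∧ lineMap p xbar t ∈ C := by
  set s := dist p c
  have hs : 0 ≤ s := dist_nonneg
  have ht : s / (s + R) ∈ Icc (0 : ℝ) 1 :=
    ⟨by positivity, div_le_one_of_le₀ (by linarith) (by positivity)⟩
  refine ⟨s / (s + R), ht, div_le_div_of_nonneg_left hs hR (by linarith), ?_⟩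
  rcases hs.eq_or_lt with hs0 | hs0
  · rw [← hs0, zero_div, lineMap_apply_zero, dist_eq_zero.mp hs0.symm]
    exact hc
  have hw : xbar + (R / s) • (p - c) ∈ C := hball <| by
    rw [mem_closedBall, dist_eq_norm, add_sub_cancel_left, norm_smul, ← dist_eq_norm,
      Real.norm_of_nonneg (by positivity), div_mul_cancel₀ _ hs0.ne']
  have hcomb :
      lineMap c (xbar + (R / s) • (p - c)) (s / (s + R)) = lineMap p xbar (s / (s + R)) := by
    simp only [lineMap_apply_module]
    match_scalars <;> field_simp <;> ring
  rw [← hcomb]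
  exact hC.lineMap_mem hc hw ht

theorem infDist_inter_le_infDist_mul (hC : Convex ℝ C) (hR : 0 < R)
    (hball : closedBall xbar R ⊆ C) (hD : Convex ℝ D) (hxbarD : xbar ∈ D) {p : E} (hp : p ∈ D) :
    infDist p (C ∩ D) ≤ infDist p C * (dist p xbar / R) := by
  have key : ∀ c ∈ C, infDist p (C ∩ D) ≤ dist p c * (dist p xbar / R) := by
    intro c hc
    obtain ⟨t, ht, htc, hmem⟩ := hC.exists_lineMap_mem_of_closedBall_subset hR hball hc p
    calc infDist p (C ∩ D) ≤ dist p (lineMap p xbar t) :=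
          infDist_le_dist_of_mem ⟨hmem, hD.lineMap_mem hp hxbarD ht⟩
      _ = t * dist p xbar := by rw [dist_left_lineMap, Real.norm_of_nonneg ht.1]
      _ ≤ dist p c / R * dist p xbar := by gcongr
      _ = dist p c * (dist p xbar / R) := by ring
  have : Nonempty C := ⟨⟨xbar, hball (mem_closedBall_self hR.le)⟩⟩
  rw [infDist_eq_iInf (s := C), Real.iInf_mul_of_nonneg (by positivity)]
  exact le_ciInf fun c => key c c.2

end Normed

section Hilbert

variable {H : Type*} [NormedAddCommGroup H] [InnerProductSpace ℝ H] [CompleteSpace H]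
  {C D : Set H} {xbar : H} {R : ℝ}

theorem Convex.exists_dist_eq_infDist_and_dist_le (hDc : IsClosed D) (hDv : Convex ℝ D)
    (hne : D.Nonempty) (x : H) :
    ∃ p ∈ D, dist x p = infDist x D ∧ ∀ y ∈ D, dist p y ≤ dist x y := by
  obtain ⟨p, hpD, hp⟩ := exists_norm_eq_iInf_of_complete_convex hne hDc.isComplete hDv x
  refine ⟨p, hpD, by simp only [infDist_eq_iInf, dist_eq_norm, hp], fun y hy => ?_⟩
  have hobtuse : inner ℝ (x - p) (y - p) ≤ 0 :=
    (norm_eq_iInf_iff_real_inner_le_zero hDv hpD).mp hp y hy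
  have hexpand : ‖x - y‖ ^ 2 = ‖x - p‖ ^ 2 - 2 * inner ℝ (x - p) (y - p) + ‖p - y‖ ^ 2 := by
    rw [← sub_sub_sub_cancel_right x y p, norm_sub_sq_real, norm_sub_rev p y]
  rw [dist_eq_norm, dist_eq_norm]
  nlinarith [norm_nonneg (x - y), norm_nonneg (p - y), sq_nonneg ‖x - p‖]

theorem infDist_inter_le_of_closedBall_subset (hC : Convex ℝ C) (hR : 0 < R)
    (hball : closedBall xbar R ⊆ C) (hDc : IsClosed D) (hDv : Convex ℝ D) (hxbarD : xbar ∈ D)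
    (x : H) :
    infDist x (C ∩ D) ≤ infDist x D + (infDist x C + infDist x D) * (dist x xbar / R) := by
  obtain ⟨p, hpD, hxp, hproj⟩ := hDv.exists_dist_eq_infDist_and_dist_le hDc ⟨xbar, hxbarD⟩ x
  have hpC : infDist p C ≤ infDist x C + infDist x D := by
    rw [← hxp, dist_comm]
    exact infDist_le_infDist_add_dist
  calc infDist x (C ∩ D) ≤ infDist p (C ∩ D) + dist x p := infDist_le_infDist_add_dist
    _ ≤ infDist p C * (dist p xbar / R) + infDist x D := by
        rw [hxp]
        gcongr
        exact infDist_inter_le_infDist_mul hC hR hball hDv hxbarD hpD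
    _ ≤ (infDist x C + infDist x D) * (dist x xbar / R) + infDist x D := by
        have hpxbar : dist p xbar ≤ dist x xbar := hproj xbar hxbarD
        gcongr
        exact add_nonneg infDist_nonneg infDist_nonneg
    _ = _ := add_comm _ _

theorem infDist_iInter_le_of_closedBall_subset (hR : 0 < R) {n : ℕ} {C : Fin (n + 1) → Set H}
    (hclosed : ∀ i, IsClosed (C i)) (hconv : ∀ i, Convex ℝ (C i))
    (hball : ∀ i, closedBall xbar R ⊆ C i) {x : H} {M : ℝ} (hM : ∀ i, infDist x (C i) ≤ M) :
    infDist x (⋂ i, C i) ≤ (1 + 2 * (dist x xbar / R)) ^ n * M := by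
  induction n with
  | zero =>
    have hC0 : (⋂ i, C i) = C 0 := by ext; simp [Fin.forall_fin_one]
    simpa [hC0] using hM 0
  | succ n ih =>
    set K := dist x xbar / R
    have hK : 0 ≤ K := by positivity
    have hsplit : (⋂ i, C i) = (⋂ i : Fin (n + 1), C i.succ) ∩ C 0 := by
      ext; simp [Fin.forall_fin_succ, and_comm]
    have htail := ih (fun i => hclosed i.succ) (fun i => hconv i.succ) (fun i => hball i.succ)
      (fun i => hM i.succ)
    have hstep := infDist_inter_le_of_closedBall_subset
      (convex_iInter fun i : Fin (n + 1) => hconv i.succ) hR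
      (subset_iInter fun i : Fin (n + 1) => hball i.succ) (hclosed 0) (hconv 0)
      (hball 0 (mem_closedBall_self hR.le)) x
    have hM0 : M ≤ (1 + 2 * K) ^ n * M :=
      le_mul_of_one_le_left (infDist_nonneg.trans (hM 0)) (one_le_pow₀ (by linarith))
    rw [hsplit]
    calc _ ≤ infDist x (C 0) + (infDist x (⋂ i : Fin (n + 1), C i.succ) + infDist x (C 0)) * K :=
          hstep
      _ ≤ (1 + 2 * K) ^ n * M + ((1 + 2 * K) ^ n * M + (1 + 2 * K) ^ n * M) * K := by
          gcongr <;> linarith [hM 0]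
      _ = (1 + 2 * K) ^ (n + 1) * M := by ring

end Hilbert

theorem stmt5_general {H : Type*} [NormedAddCommGroup H] [InnerProductSpace ℝ H]
    [CompleteSpace H]
    (m : ℕ) (C : Fin m → Set H)
    (hclosed : ∀ i, IsClosed (C i)) (hconv : ∀ i, Convex ℝ (C i))
    (xbar : H) (R : ℝ) (hR : 0 < R)
    (hball : closedBall xbar R ⊆ ⋂ i, C i) :
    ∀ x : H, Metric.infDist x (⋂ i, C i) ≤
      (1 + 2 * ‖x - xbar‖ / R) ^ (m - 1) * ⨆ i, Metric.infDist x (C i) := by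
  intro x
  cases m with
  | zero => simp [infDist_zero_of_mem]
  | succ n =>
    rw [mul_div_assoc, ← dist_eq_norm, Nat.add_sub_cancel]
    exact infDist_iInter_le_of_closedBall_subset hR hclosed hconv
      (fun i => hball.trans (iInter_subset C i))
      (fun i => le_ciSup (f := fun i => infDist x (C i)) (finite_range _).bddAbove i)

/-- **Proposition 3.9** (regularity of an intersection of convex sets with
nonempty-interior intersection): if `C₁, …, C_m` (`m ≥ 2`) are closed convex
subsets of a real Hilbert space `H` and the closed ball `B(x̄,R)` is contained
in their intersection, then for every `x ∈ H`,
`dist(x, ⋂ᵢ Cᵢ) ≤ (1 + 2‖x − x̄‖/R)^(m−1) · maxᵢ dist(x, Cᵢ)`. -/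
theorem stmt5 {H : Type*} [NormedAddCommGroup H] [InnerProductSpace ℝ H]
    [CompleteSpace H]
    (m : ℕ) (hm : 2 ≤ m) (C : Fin m → Set H)
    (hclosed : ∀ i, IsClosed (C i)) (hconv : ∀ i, Convex ℝ (C i))
    (xbar : H) (R : ℝ) (hR : 0 < R)
    (hball : closedBall xbar R ⊆ ⋂ i, C i) :
    ∀ x : H, Metric.infDist x (⋂ i, C i) ≤
      (1 + 2 * ‖x - xbar‖ / R) ^ (m - 1) * ⨆ i, Metric.infDist x (C i) :=
  stmt5_general m C hclosed hconv xbar R hR hball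
end

section
/- Error bound for the barycentric feasibility potential: let m ≥ 2, let C₁, …, C_m be closed convex subsets of H with B(x̄, R) ⊆ C := ⋂_{i=1}^m C_i for some x̄ ∈ H, R > 0, let α₁, …, α_m > 0 with Σᵢ αᵢ = 1, and set f(x) = ½ Σ_{i=1}^m αᵢ·dist(x, C_i)². Then for every ρ ≥ 0 and every x ∈ H with ‖x − x̄‖ ≤ ρ, dist(x, C) ≤ (1 + 2ρ/R)^{m−1} · (2/min_{i} αᵢ)^{1/2} · √(f(x)). Consequently f satisfies the Łojasiewicz inequality on B(x̄, ρ) ∩ {f > 0} with desingularizing function φ(s) = √(2s/M), where M = ¼ (1 + 2ρ/R)^{2−2m} min_i αᵢ: namely φ′(f(x))·‖∇f(x)‖ ≥ 1 there. -/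
/-!
For closed convex sets `A ⊇ B(c, R)` and `B ∋ c`, the nearest points `a ∈ A` and `b ∈ B` to `x`
locate a point of `A ∩ B` on the segment `[b, c]` within `‖b - a‖ ‖x - c‖ / R` of `b`, so
`dist(x, A ∩ B) ≤ dist(x, B) + (dist(x, A) + dist(x, B)) ‖x - c‖ / R`. Adding the sets `Cᵢ` one at
a time, each step multiplies a common bound on the distances by `1 + 2ρ/R`, and every
`dist(x, Cᵢ)` is at most `√(2 f(x) / minᵢ αᵢ)`. For the Łojasiewicz inequality, the variational
inequality of the projections gives `2 f(x) ≤ ⟪∇f(x), x - p⟫ ≤ ‖∇f(x)‖ ‖x - p‖` for all `p ∈ C`,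
hence `2 f(x) ≤ ‖∇f(x)‖ dist(x, C)`, and the error bound turns this into a lower bound on
`‖∇f(x)‖`.
-/

open Metric Set Finset RealInnerProductSpace

section Normed

variable {E : Type*} [NormedAddCommGroup E]

theorem infDist_eq_norm_sub_of_forall_norm_sub_le {K : Set E} {x p : E} (hp : p ∈ K)
    (hmin : ∀ y ∈ K, ‖x - p‖ ≤ ‖x - y‖) : infDist x K = ‖x - p‖ :=
  le_antisymm ((infDist_le_dist_of_mem hp).trans_eq (dist_eq_norm _ _))
    ((le_infDist ⟨p, hp⟩).2 fun y hy => (hmin y hy).trans_eq (dist_eq_norm _ _).symm)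

variable [NormedSpace ℝ E]

/-- The point `z = (1 - t) b + t c` with `t = δ / (δ + R)`, `δ = ‖b - a‖`, lies in `B` by
convexity, and equals `(1 - t) a + t y` with `y = c + (R / δ) (b - a) ∈ closedBall c R ⊆ A`. -/
theorem exists_mem_inter_norm_sub_le_mul {A B : Set E} (hA : Convex ℝ A) (hB : Convex ℝ B)
    {c : E} {R : ℝ} (hR : 0 < R) (hball : closedBall c R ⊆ A) (hcB : c ∈ B)
    {a b : E} (ha : a ∈ A) (hb : b ∈ B) :
    ∃ z ∈ A ∩ B, ‖b - z‖ ≤ ‖b - a‖ / R * ‖b - c‖ := by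
  rcases (norm_nonneg (b - a)).eq_or_lt with hδ | hδ
  · refine ⟨b, ⟨?_, hb⟩, by rw [sub_self, norm_zero]; positivity⟩
    rwa [sub_eq_zero.mp (norm_eq_zero.mp hδ.symm)]
  set δ := ‖b - a‖
  set t := δ / (δ + R)
  have ht₀ : 0 ≤ t := by positivity
  have ht₁ : t ≤ 1 := (div_le_one (by positivity)).2 (by linarith)
  have hy : c + (R / δ) • (b - a) ∈ A := hball <| by
    rw [mem_closedBall, dist_eq_norm, add_sub_cancel_left, norm_smul, Real.norm_of_nonneg
      (by positivity), div_mul_cancel₀ _ hδ.ne']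
  have hz : (1 - t) • b + t • c = (1 - t) • a + t • (c + (R / δ) • (b - a)) := by
    have : t * (R / δ) = 1 - t := by simp only [t]; field_simp; ring
    rw [smul_add, smul_smul, this]
    module
  refine ⟨(1 - t) • b + t • c, ⟨?_, hB hb hcB (by linarith) ht₀ (by ring)⟩, ?_⟩
  · rw [hz]
    exact hA ha hy (by linarith) ht₀ (by ring)
  · have hbz : b - ((1 - t) • b + t • c) = t • (b - c) := by module
    rw [hbz, norm_smul, Real.norm_of_nonneg ht₀]
    gcongr
    rw [div_le_div_iff₀ (by positivity) hR]
    nlinarith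

end Normed

section Hilbert

variable {H : Type*} [NormedAddCommGroup H] [InnerProductSpace ℝ H]

theorem real_inner_sub_sub_nonpos_of_forall_norm_sub_le {K : Set H} (hK : Convex ℝ K)
    {x p : H} (hp : p ∈ K) (hmin : ∀ y ∈ K, ‖x - p‖ ≤ ‖x - y‖) {y : H} (hy : y ∈ K) :
    ⟪x - p, y - p⟫ ≤ 0 := by
  have : Nonempty K := ⟨⟨p, hp⟩⟩
  refine (norm_eq_iInf_iff_real_inner_le_zero hK hp).1 (le_antisymm ?_ ?_) y hy
  · exact le_ciInf fun w => hmin w w.2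
  · exact ciInf_le (f := fun w : K => ‖x - w‖) ⟨0, forall_mem_range.2 fun _ => norm_nonneg _⟩
      ⟨p, hp⟩

theorem norm_sub_le_of_forall_norm_sub_le {K : Set H} (hK : Convex ℝ K)
    {x p : H} (hp : p ∈ K) (hmin : ∀ y ∈ K, ‖x - p‖ ≤ ‖x - y‖) {c : H} (hc : c ∈ K) :
    ‖p - c‖ ≤ ‖x - c‖ := by
  have hinner := real_inner_sub_sub_nonpos_of_forall_norm_sub_le hK hp hmin hc
  have hsq : ‖x - c‖ ^ 2 = ‖x - p‖ ^ 2 - 2 * ⟪x - p, c - p⟫ + ‖p - c‖ ^ 2 := by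
    rw [← norm_sub_rev c p, ← norm_sub_sq_real, sub_sub_sub_cancel_right]
  exact (sq_le_sq₀ (norm_nonneg _) (norm_nonneg _)).1 (by nlinarith [sq_nonneg ‖x - p‖])

theorem exists_mem_forall_norm_sub_le [CompleteSpace H] {K : Set H} (hKcl : IsClosed K)
    (hK : Convex ℝ K) (hne : K.Nonempty) (x : H) :
    ∃ p ∈ K, ∀ y ∈ K, ‖x - p‖ ≤ ‖x - y‖ := by
  obtain ⟨p, hp, hpinf⟩ := exists_norm_eq_iInf_of_complete_convex hne hKcl.isComplete hK x
  refine ⟨p, hp, fun y hy => ?_⟩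
  rw [hpinf]
  exact ciInf_le (f := fun w : K => ‖x - w‖) ⟨0, forall_mem_range.2 fun _ => norm_nonneg _⟩
    ⟨y, hy⟩

theorem infDist_inter_le [CompleteSpace H] {A B : Set H} (hAcl : IsClosed A) (hA : Convex ℝ A)
    (hBcl : IsClosed B) (hB : Convex ℝ B) {c : H} {R : ℝ} (hR : 0 < R)
    (hball : closedBall c R ⊆ A) (hcB : c ∈ B) (x : H) :
    infDist x (A ∩ B) ≤ infDist x B + (infDist x A + infDist x B) * (‖x - c‖ / R) := by
  obtain ⟨a, ha, hamin⟩ :=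
    exists_mem_forall_norm_sub_le hAcl hA ⟨c, hball (mem_closedBall_self hR.le)⟩ x
  obtain ⟨b, hb, hbmin⟩ := exists_mem_forall_norm_sub_le hBcl hB ⟨c, hcB⟩ x
  obtain ⟨z, hz, hbz⟩ := exists_mem_inter_norm_sub_le_mul hA hB hR hball hcB ha hb
  have hba : ‖b - a‖ ≤ ‖x - a‖ + ‖x - b‖ := by
    rw [add_comm, ← norm_sub_rev b x]
    exact norm_sub_le_norm_sub_add_norm_sub _ _ _
  rw [infDist_eq_norm_sub_of_forall_norm_sub_le ha hamin,
    infDist_eq_norm_sub_of_forall_norm_sub_le hb hbmin]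
  calc infDist x (A ∩ B) ≤ ‖x - z‖ := (infDist_le_dist_of_mem hz).trans_eq (dist_eq_norm _ _)
    _ ≤ ‖x - b‖ + ‖b - z‖ := norm_sub_le_norm_sub_add_norm_sub _ _ _
    _ ≤ ‖x - b‖ + ‖b - a‖ / R * ‖x - c‖ := by
        gcongr
        exact hbz.trans (by gcongr; exact norm_sub_le_of_forall_norm_sub_le hB hb hbmin hcB)
    _ ≤ ‖x - b‖ + (‖x - a‖ + ‖x - b‖) * (‖x - c‖ / R) := by
        rw [div_mul_eq_mul_div, mul_div_assoc]
        gcongr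

theorem infDist_biInter_le [CompleteSpace H] {ι : Type*} {s : Finset ι} (hs : s.Nonempty)
    {C : ι → Set H} (hcl : ∀ i ∈ s, IsClosed (C i)) (hcv : ∀ i ∈ s, Convex ℝ (C i))
    {c : H} {R : ℝ} (hR : 0 < R) (hball : ∀ i ∈ s, closedBall c R ⊆ C i) (x : H) {d : ℝ}
    (hd : ∀ i ∈ s, infDist x (C i) ≤ d) :
    infDist x (⋂ i ∈ s, C i) ≤ (1 + 2 * ‖x - c‖ / R) ^ (#s - 1) * d := by
  induction hs using Finset.Nonempty.cons_induction with
  | singleton i => simpa using hd i (mem_singleton_self i)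
  | cons i s hi hs ih =>
    simp only [mem_cons, forall_eq_or_imp] at hcl hcv hball hd
    have hcs : c ∈ ⋂ j ∈ s, C j :=
      mem_iInter₂.2 fun j hj => hball.2 j hj (mem_closedBall_self hR.le)
    have hinter := infDist_inter_le hcl.1 hcv.1 (isClosed_biInter hcl.2) (convex_iInter₂ hcv.2)
      hR hball.1 hcs x
    set K := 1 + 2 * ‖x - c‖ / R
    have hd_le : d ≤ K ^ (#s - 1) * d :=
      le_mul_of_one_le_left (infDist_nonneg.trans hd.1) (one_le_pow₀ (by simp only [K]; bound))
    have hs_le := ih hcl.2 hcv.2 hball.2 hd.2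
    classical
    rw [cons_eq_insert, set_biInter_insert, card_insert_of_notMem hi, Nat.add_sub_cancel,
      ← Nat.sub_add_cancel hs.card_pos, pow_succ]
    calc infDist x (C i ∩ ⋂ j ∈ s, C j)
        ≤ infDist x (⋂ j ∈ s, C j) + (infDist x (C i) + infDist x (⋂ j ∈ s, C j)) *
          (‖x - c‖ / R) := hinter
      _ ≤ K ^ (#s - 1) * d + (K ^ (#s - 1) * d + K ^ (#s - 1) * d) * (‖x - c‖ / R) := by
        gcongr
        exact hd.1.trans hd_le
      _ = K ^ (#s - 1) * K * d := by simp only [K]; ring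

theorem sum_mul_sq_infDist_le_norm_mul_infDist_iInter {ι : Type*} [Fintype ι] {C : ι → Set H}
    (hcv : ∀ i, Convex ℝ (C i)) (hne : (⋂ i, C i).Nonempty) {α : ι → ℝ} (hα : ∀ i, 0 ≤ α i)
    {P : ι → H → H} (hP : ∀ i z, P i z ∈ C i ∧ ∀ y ∈ C i, ‖z - P i z‖ ≤ ‖z - y‖) (x : H) :
    ∑ i, α i * infDist x (C i) ^ 2 ≤ ‖∑ i, α i • (x - P i x)‖ * infDist x (⋂ i, C i) := by
  set g := ∑ i, α i • (x - P i x)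
  have key : ∀ y ∈ ⋂ i, C i, ∑ i, α i * infDist x (C i) ^ 2 ≤ ‖g‖ * dist x y := by
    intro y hy
    calc ∑ i, α i * infDist x (C i) ^ 2 ≤ ∑ i, α i * ⟪x - P i x, x - y⟫ := by
          gcongr with i
          · exact hα i
          have hinner := real_inner_sub_sub_nonpos_of_forall_norm_sub_le (hcv i) (hP i x).1
            (hP i x).2 (mem_iInter.1 hy i)
          rw [infDist_eq_norm_sub_of_forall_norm_sub_le (hP i x).1 (hP i x).2,
            ← sub_sub_sub_cancel_right x y (P i x), inner_sub_right, real_inner_self_eq_norm_sq]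
          linarith
      _ = ⟪g, x - y⟫ := by simp only [g, sum_inner, real_inner_smul_left]
      _ ≤ ‖g‖ * dist x y := (real_inner_le_norm _ _).trans_eq (by rw [dist_eq_norm])
  have : Nonempty (⋂ i, C i) := hne.to_subtype
  rw [infDist_eq_iInf, Real.mul_iInf_of_nonneg (norm_nonneg _)]
  exact le_ciInf fun y => key y y.2

end Hilbert

theorem sq_le_sum_mul_sq_div {ι : Type*} [Fintype ι] {w : ι → ℝ} (hw : ∀ j, 0 ≤ w j) {μ : ℝ}
    (hμ : 0 < μ) {i : ι} (hμi : μ ≤ w i) (t : ι → ℝ) : t i ^ 2 ≤ (∑ j, w j * t j ^ 2) / μ := by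
  rw [le_div_iff₀ hμ]
  calc t i ^ 2 * μ ≤ w i * t i ^ 2 := by rw [mul_comm]; gcongr
    _ ≤ ∑ j, w j * t j ^ 2 :=
      single_le_sum (fun j _ => mul_nonneg (hw j) (sq_nonneg _)) (mem_univ i)

theorem one_le_inv_sqrt_mul_of_two_mul_le {F G μ e : ℝ} (hF : 0 < F) (hμ : 0 < μ) (he : 0 < e)
    (h : 2 * F ≤ G * (e * √(2 / μ) * √F)) :
    1 ≤ (√(2 * ((1 / 4) * (e ^ 2)⁻¹ * μ) * F))⁻¹ * G := by
  set S := √(2 * ((1 / 4) * (e ^ 2)⁻¹ * μ) * F)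
  set D := e * √(2 / μ) * √F
  have hS : 0 < S := by positivity
  have hD : 0 < D := by positivity
  have hSD : S * D = F := by
    refine (sq_eq_sq₀ (by positivity) hF.le).1 ?_
    simp only [S, D, mul_pow]
    rw [Real.sq_sqrt (by positivity), Real.sq_sqrt (by positivity), Real.sq_sqrt hF.le]
    field_simp
    ring
  rw [one_le_inv_mul₀ hS]
  nlinarith

theorem stmt6_general {H : Type*} [NormedAddCommGroup H] [InnerProductSpace ℝ H]
    [CompleteSpace H]
    (m : ℕ) (hm : 2 ≤ m) (C : Fin m → Set H)
    (hclosed : ∀ i, IsClosed (C i)) (hconv : ∀ i, Convex ℝ (C i))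
    (xbar : H) (R : ℝ) (hR : 0 < R)
    (hball : closedBall xbar R ⊆ ⋂ i, C i)
    (α : Fin m → ℝ) (hα : ∀ i, 0 < α i)
    (P : Fin m → H → H)
    (hP : ∀ i z, P i z ∈ C i ∧ ∀ y ∈ C i, ‖z - P i z‖ ≤ ‖z - y‖)
    (f : H → ℝ)
    (hf : ∀ x, f x = (1 / 2) * ∑ i, α i * Metric.infDist x (C i) ^ 2) :
    ∀ ρ : ℝ, 0 ≤ ρ → ∀ x : H, ‖x - xbar‖ ≤ ρ →
      (Metric.infDist x (⋂ i, C i) ≤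
        (1 + 2 * ρ / R) ^ (m - 1) * Real.sqrt (2 / ⨅ i, α i) * Real.sqrt (f x)) ∧
      (0 < f x →
        1 ≤ (Real.sqrt (2 * ((1 / 4) * (1 + 2 * ρ / R) ^ ((2 : ℤ) - 2 * m) *
              ⨅ i, α i) * f x))⁻¹ * ‖∑ i, α i • (x - P i x)‖) := by
  intro ρ _ x hx
  have : Nonempty (Fin m) := ⟨⟨0, by omega⟩⟩
  obtain ⟨j, hj⟩ := exists_eq_ciInf_of_finite (f := α)
  set μ := ⨅ i, α i
  have hμ : 0 < μ := hj ▸ hα j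
  have hCi (i : Fin m) : infDist x (C i) ≤ √(2 / μ) * √(f x) := by
    rw [← Real.sqrt_mul (by positivity), hf]
    exact Real.le_sqrt_of_sq_le ((sq_le_sum_mul_sq_div (fun j => (hα j).le) hμ
      (ciInf_le (Finite.bddBelow_range α) i) (fun k => infDist x (C k))).trans_eq (by ring))
  have hdist : infDist x (⋂ i, C i) ≤ (1 + 2 * ρ / R) ^ (m - 1) * √(2 / μ) * √(f x) := by
    have h := infDist_biInter_le univ_nonempty (fun i _ => hclosed i) (fun i _ => hconv i) hR
      (fun i _ => hball.trans (iInter_subset C i)) x (fun i _ => hCi i)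
    simp only [Finset.mem_univ, iInter_true, card_univ, Fintype.card_fin] at h
    rw [mul_assoc]
    exact h.trans (by gcongr)
  refine ⟨hdist, fun hfx => ?_⟩
  have hpow : (1 + 2 * ρ / R) ^ ((2 : ℤ) - 2 * m) = (((1 + 2 * ρ / R) ^ (m - 1)) ^ 2)⁻¹ := by
    rw [show (2 : ℤ) - 2 * m = -((m - 1) * 2 : ℕ) by omega, zpow_neg, zpow_natCast, pow_mul]
  rw [hpow]
  refine one_le_inv_sqrt_mul_of_two_mul_le hfx hμ (by positivity) ?_
  calc 2 * f x = ∑ i, α i * infDist x (C i) ^ 2 := by rw [hf]; ring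
    _ ≤ ‖∑ i, α i • (x - P i x)‖ * infDist x (⋂ i, C i) :=
      sum_mul_sq_infDist_le_norm_mul_infDist_iInter hconv
        ⟨xbar, hball (mem_closedBall_self hR.le)⟩ (fun i => (hα i).le) hP x
    _ ≤ _ := by gcongr

/-- **Error bound for the barycentric feasibility potential**: with
`C₁,…,C_m` closed convex, `B(x̄,R) ⊆ C = ⋂ᵢ Cᵢ`, weights `αᵢ > 0` summing to 1
and `f(x) = ½ Σᵢ αᵢ dist(x,Cᵢ)²`, for every `ρ ≥ 0` and every `x` with
`‖x − x̄‖ ≤ ρ` one has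
`dist(x,C) ≤ (1 + 2ρ/R)^(m−1) · (2/minᵢ αᵢ)^{1/2} · √(f(x))`;
consequently `f` satisfies the Łojasiewicz inequality on `B(x̄,ρ) ∩ {f > 0}`
with desingularizing function `φ(s) = √(2s/M)`, `M = ¼(1+2ρ/R)^{2−2m} minᵢ αᵢ`:
`φ'(f(x))·‖∇f(x)‖ = (√(2·M·f(x)))⁻¹·‖Σᵢ αᵢ (x − P_{Cᵢ} x)‖ ≥ 1` there, where
`P_{Cᵢ}` is the metric projection onto `Cᵢ`. -/
theorem stmt6 {H : Type*} [NormedAddCommGroup H] [InnerProductSpace ℝ H]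
    [CompleteSpace H]
    (m : ℕ) (hm : 2 ≤ m) (C : Fin m → Set H)
    (hclosed : ∀ i, IsClosed (C i)) (hconv : ∀ i, Convex ℝ (C i))
    (xbar : H) (R : ℝ) (hR : 0 < R)
    (hball : closedBall xbar R ⊆ ⋂ i, C i)
    (α : Fin m → ℝ) (hα : ∀ i, 0 < α i) (hαsum : ∑ i, α i = 1)
    (P : Fin m → H → H)
    (hP : ∀ i z, P i z ∈ C i ∧ ∀ y ∈ C i, ‖z - P i z‖ ≤ ‖z - y‖)
    (f : H → ℝ)
    (hf : ∀ x, f x = (1 / 2) * ∑ i, α i * Metric.infDist x (C i) ^ 2) :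
    ∀ ρ : ℝ, 0 ≤ ρ → ∀ x : H, ‖x - xbar‖ ≤ ρ →
      (Metric.infDist x (⋂ i, C i) ≤
        (1 + 2 * ρ / R) ^ (m - 1) * Real.sqrt (2 / ⨅ i, α i) * Real.sqrt (f x)) ∧
      (0 < f x →
        1 ≤ (Real.sqrt (2 * ((1 / 4) * (1 + 2 * ρ / R) ^ ((2 : ℤ) - 2 * m) *
              ⨅ i, α i) * f x))⁻¹ * ‖∑ i, α i • (x - P i x)‖) :=
  stmt6_general m hm C hclosed hconv xbar R hR hball α hα P hP f hf
end

section
/- Error bound for the alternating-projection potential: let C₁, C₂ be closed convex subsets of H with B(x̄, R) ⊆ C := C₁ ∩ C₂ for some x̄ ∈ H, R > 0, and let g(x) = ½ dist(x, C₂)² for x ∈ C₁. Then for every ρ ≥ 0 and every x ∈ C₁ with ‖x − x̄‖ ≤ ρ, dist(x, C₁ ∩ C₂) ≤ 2(1 + 2ρ/R)·√(g(x)), i.e. dist(x, C₁ ∩ C₂) ≤ √2·(1 + 2ρ/R)·dist(x, C₂). -/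
open Metric Set

/-
Move `x ∈ C₁` towards `x̄` by the fraction `λ = d / (d + R)`, where `d = ‖x - y‖` for some
`y ∈ C₂`. The point `z = λ x̄ + (1 - λ) x` lies in `C₁` by convexity, and it also equals
`λ w + (1 - λ) y` with `w = x̄ + (R / d)(x - y) ∈ B(x̄, R) ⊆ C₂`, so it lies in `C₂`. Hence
`dist(x, C₁ ∩ C₂) ≤ ‖x - z‖ = λ ‖x - x̄‖ ≤ (‖x - x̄‖ / R) d`, and taking the infimum over `y`
gives `dist(x, C₁ ∩ C₂) ≤ (ρ / R) dist(x, C₂)`, which is stronger than both claimed bounds.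
-/

section ErrorBound

variable {E : Type*} [NormedAddCommGroup E] [NormedSpace ℝ E]

theorem Convex.smul_add_smul_mem_of_closedBall_subset {C : Set E} (hC : Convex ℝ C) {xbar : E} {R : ℝ}
    (hR : 0 < R) (hball : closedBall xbar R ⊆ C) (x : E) {y : E} (hy : y ∈ C) :
    (‖x - y‖ / (‖x - y‖ + R)) • xbar + (R / (‖x - y‖ + R)) • x ∈ C := by
  set d := ‖x - y‖
  have hdR : 0 < d + R := by positivity
  rcases (show 0 ≤ d from norm_nonneg _).eq_or_lt with hd0 | hdpos
  · obtain rfl : x = y := sub_eq_zero.mp (norm_eq_zero.mp hd0.symm)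
    simpa [d, hR.ne'] using hy
  have hw : xbar + (R / d) • (x - y) ∈ closedBall xbar R := by
    rw [mem_closedBall, dist_eq_norm, add_sub_cancel_left, norm_smul, Real.norm_of_nonneg
      (by positivity), div_mul_cancel₀ _ hdpos.ne']
  have hz : (d / (d + R)) • xbar + (R / (d + R)) • x =
      (d / (d + R)) • (xbar + (R / d) • (x - y)) + (R / (d + R)) • y := by
    rw [smul_add, smul_smul, show d / (d + R) * (R / d) = R / (d + R) by field_simp]
    module
  rw [hz]
  exact hC (hball hw) hy (by positivity) (by positivity) (by field_simp)

theorem infDist_inter_le_mul_norm_sub {C₁ C₂ : Set E} (hconv₁ : Convex ℝ C₁)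
    (hconv₂ : Convex ℝ C₂) {xbar : E} (hxbar : xbar ∈ C₁) {R : ℝ} (hR : 0 < R)
    (hball : closedBall xbar R ⊆ C₂) {x : E} (hx : x ∈ C₁) {y : E} (hy : y ∈ C₂) :
    infDist x (C₁ ∩ C₂) ≤ ‖x - xbar‖ / R * ‖x - y‖ := by
  set d := ‖x - y‖
  have hdR : 0 < d + R := by positivity
  have hz₁ : (d / (d + R)) • xbar + (R / (d + R)) • x ∈ C₁ :=
    hconv₁ hxbar hx (by positivity) (by positivity) (by field_simp)
  have hz₂ := hconv₂.smul_add_smul_mem_of_closedBall_subset hR hball x hy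
  have hdist : dist x ((d / (d + R)) • xbar + (R / (d + R)) • x) = d / (d + R) * ‖x - xbar‖ := by
    have hcompl : R / (d + R) = 1 - d / (d + R) := by field_simp; ring
    rw [dist_eq_norm, hcompl, show x - ((d / (d + R)) • xbar + (1 - d / (d + R)) • x) =
      (d / (d + R)) • (x - xbar) by module, norm_smul, Real.norm_of_nonneg (by positivity)]
  calc infDist x (C₁ ∩ C₂) ≤ d / (d + R) * ‖x - xbar‖ := hdist ▸ infDist_le_dist_of_mem ⟨hz₁, hz₂⟩
    _ ≤ d / R * ‖x - xbar‖ := by gcongr; linarith [norm_nonneg (x - y)]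
    _ = ‖x - xbar‖ / R * d := by ring

theorem infDist_inter_le_mul_infDist {C₁ C₂ : Set E} (hconv₁ : Convex ℝ C₁)
    (hconv₂ : Convex ℝ C₂) {xbar : E} (hxbar : xbar ∈ C₁) {R : ℝ} (hR : 0 < R)
    (hball : closedBall xbar R ⊆ C₂) {x : E} (hx : x ∈ C₁) :
    infDist x (C₁ ∩ C₂) ≤ ‖x - xbar‖ / R * infDist x C₂ := by
  have : Nonempty C₂ := ⟨⟨xbar, hball (mem_closedBall_self hR.le)⟩⟩
  rw [infDist_eq_iInf (s := C₂), Real.mul_iInf_of_nonneg (by positivity)]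
  refine le_ciInf fun ⟨y, hy⟩ => ?_
  rw [dist_eq_norm]
  exact infDist_inter_le_mul_norm_sub hconv₁ hconv₂ hxbar hR hball hx hy

end ErrorBound

theorem two_mul_sqrt_half_mul_sq {d : ℝ} (hd : 0 ≤ d) :
    2 * Real.sqrt (1 / 2 * d ^ 2) = Real.sqrt 2 * d := by
  rw [Real.sqrt_mul (by norm_num), Real.sqrt_sq hd, ← mul_assoc, one_div, Real.sqrt_inv,
    ← div_eq_mul_inv, Real.div_sqrt]

theorem stmt7_general {H : Type*} [NormedAddCommGroup H] [InnerProductSpace ℝ H]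
    (C₁ C₂ : Set H)
    (hconv₁ : Convex ℝ C₁)
    (hconv₂ : Convex ℝ C₂)
    (xbar : H) (R : ℝ) (hR : 0 < R)
    (hball : closedBall xbar R ⊆ C₁ ∩ C₂) :
    ∀ ρ : ℝ, 0 ≤ ρ → ∀ x ∈ C₁, ‖x - xbar‖ ≤ ρ →
      Metric.infDist x (C₁ ∩ C₂) ≤
        2 * (1 + 2 * ρ / R) * Real.sqrt ((1 / 2) * Metric.infDist x C₂ ^ 2) ∧
      Metric.infDist x (C₁ ∩ C₂) ≤
        Real.sqrt 2 * (1 + 2 * ρ / R) * Metric.infDist x C₂ := by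
  intro ρ hρ x hx hxρ
  have hxbar : xbar ∈ C₁ := (hball (mem_closedBall_self hR.le)).1
  have hbound := infDist_inter_le_mul_infDist hconv₁ hconv₂ hxbar hR
    (hball.trans inter_subset_right) hx
  have hcoeff : ‖x - xbar‖ / R ≤ Real.sqrt 2 * (1 + 2 * ρ / R) := by
    calc ‖x - xbar‖ / R ≤ ρ / R := by gcongr
      _ ≤ 1 * (1 + 2 * ρ / R) := by linarith [div_nonneg hρ hR.le, mul_div_assoc 2 ρ R]
      _ ≤ Real.sqrt 2 * (1 + 2 * ρ / R) := by
        gcongr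
        exact Real.one_le_sqrt.mpr one_le_two
  have hmain : infDist x (C₁ ∩ C₂) ≤ Real.sqrt 2 * (1 + 2 * ρ / R) * infDist x C₂ :=
    hbound.trans (by gcongr; exact infDist_nonneg)
  refine ⟨hmain.trans_eq ?_, hmain⟩
  rw [mul_right_comm, ← two_mul_sqrt_half_mul_sq infDist_nonneg]
  ring

/-- **Error bound for the alternating-projection potential**: with `C₁, C₂`
closed convex subsets of a real Hilbert space and `B(x̄,R) ⊆ C₁ ∩ C₂`, for every
`ρ ≥ 0` and every `x ∈ C₁` with `‖x − x̄‖ ≤ ρ`, one has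
`dist(x, C₁ ∩ C₂) ≤ 2(1 + 2ρ/R)·√(g(x))` where `g(x) = ½ dist(x,C₂)²`,
i.e. `dist(x, C₁ ∩ C₂) ≤ √2·(1 + 2ρ/R)·dist(x, C₂)`. -/
theorem stmt7 {H : Type*} [NormedAddCommGroup H] [InnerProductSpace ℝ H]
    [CompleteSpace H]
    (C₁ C₂ : Set H)
    (hclosed₁ : IsClosed C₁) (hconv₁ : Convex ℝ C₁)
    (hclosed₂ : IsClosed C₂) (hconv₂ : Convex ℝ C₂)
    (xbar : H) (R : ℝ) (hR : 0 < R)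
    (hball : closedBall xbar R ⊆ C₁ ∩ C₂) :
    ∀ ρ : ℝ, 0 ≤ ρ → ∀ x ∈ C₁, ‖x - xbar‖ ≤ ρ →
      Metric.infDist x (C₁ ∩ C₂) ≤
        2 * (1 + 2 * ρ / R) * Real.sqrt ((1 / 2) * Metric.infDist x C₂ ^ 2) ∧
      Metric.infDist x (C₁ ∩ C₂) ≤
        Real.sqrt 2 * (1 + 2 * ρ / R) * Metric.infDist x C₂ :=
  stmt7_general C₁ C₂ hconv₁ hconv₂ xbar R hR hball
end

section
/- The forward–backward splitting method generates subgradient descent sequences: let g : H → (−∞,+∞] be proper, lower-semicontinuous and convex, let h : H → ℝ be convex and differentiable with ∇h Lipschitz continuous with constant L > 0, and set f = g + h. Let 0 < λ⁻ ≤ λ_k ≤ λ⁺ < 2/L for all k, let x₀ ∈ dom g, and suppose that for each k ≥ 0, x_{k+1} minimizes over H the function z ↦ g(z) + ⟨∇h(x_k), z − x_k⟩ + (1/(2λ_k))‖z − x_k‖². Then with a = 1/λ⁺ − L/2 and b = 1/λ⁻ + L, for every k ≥ 0: (H1) f(x_{k+1}) + a‖x_{k+1} − x_k‖² ≤ f(x_k),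 and (H2) there exists ω ∈ ∂f(x_{k+1}) with ‖ω‖ ≤ b‖x_{k+1} − x_k‖. (Proposition 4.2.) -/
/-!
The proximal step makes `-(∇h(x_k) + (x_{k+1} - x_k)/λ_k)` a subgradient of `g` at `x_{k+1}`
(compare the minimized objective at `x_{k+1}` and at points of the segment towards any `y`, and let
the point tend to `x_{k+1}`). Adding `∇h(x_{k+1})`, a subgradient of the convex `h`, gives a
subgradient of `f` whose norm is controlled by the Lipschitz constant of `∇h` and by `1/λ_k`.
Testing the subgradient inequality of `g` at `y = x_k` and adding the descent lemma for `h` gives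
the sufficient decrease `(H1)`.
-/

open Metric Set Filter
open scoped RealInnerProductSpace

noncomputable section

variable {H : Type*} [NormedAddCommGroup H] [InnerProductSpace ℝ H] [CompleteSpace H]

open scoped Topology

variable {E : Type*} [NormedAddCommGroup E] [InnerProductSpace ℝ E]

section Gradient

variable [CompleteSpace E] {f : E → ℝ} {f' : E → E}

theorem HasGradientAt.hasDerivAt_comp_add_smul {u z d : E} {t : ℝ}
    (hf : HasGradientAt f u (z + t • d)) :
    HasDerivAt (fun s : ℝ => f (z + s • d)) ⟪u, d⟫ t := by
  have hline : HasDerivAt (fun s : ℝ => z + s • d) d t := by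
    simpa using ((hasDerivAt_id t).smul_const d).const_add z
  have := (hasGradientAt_iff_hasFDerivAt.mp hf).comp_hasDerivAt t hline
  simp only [InnerProductSpace.toDual_apply_apply] at this
  exact this

theorem ConvexOn.add_inner_le_of_hasGradientAt (hconv : ConvexOn ℝ univ f) {p u : E}
    (hgrad : HasGradientAt f u p) (y : E) :
    f p + ⟪u, y - p⟫ ≤ f y := by
  have hderiv : HasDerivAt (fun s : ℝ => f (p + s • (y - p))) ⟪u, y - p⟫ 0 :=
    HasGradientAt.hasDerivAt_comp_add_smul (by simpa using hgrad)
  have hline : ConvexOn ℝ univ (fun s : ℝ => f (p + s • (y - p))) :=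
    hconv.comp_affineMap ((AffineMap.lineMap p y : ℝ →ᵃ[ℝ] E)) |>.congr fun s _ => by
      simp [AffineMap.lineMap_apply, add_comm]
  have := hline.le_slope_of_hasDerivAt (mem_univ 0) (mem_univ 1) zero_lt_one hderiv
  simp only [slope_def_field, one_smul, zero_smul, add_zero, add_sub_cancel] at this
  linarith

theorem ConvexOn.mem_subdiff_of_hasGradientAt (hconv : ConvexOn ℝ univ f) {p u : E}
    (hgrad : HasGradientAt f u p) : u ∈ subdiff (fun y => (f y : EReal)) p :=
  fun y => show ((f p : ℝ) : EReal) + _ ≤ ((f y : ℝ) : EReal) by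
    exact_mod_cast hconv.add_inner_le_of_hasGradientAt hgrad y

theorem le_add_inner_add_of_lipschitz_gradient {L : ℝ} (hgrad : ∀ z, HasGradientAt f (f' z) z)
    (hlip : ∀ z w, ‖f' z - f' w‖ ≤ L * ‖z - w‖) (z w : E) :
    f w ≤ f z + ⟪f' z, w - z⟫ + L / 2 * ‖w - z‖ ^ 2 := by
  set d := w - z
  have hderiv : ∀ t : ℝ, HasDerivAt (fun s : ℝ => f (z + s • d)) ⟪f' (z + t • d), d⟫ t :=
    fun t => (hgrad _).hasDerivAt_comp_add_smul
  have hbound : ∀ t : ℝ, HasDerivAt (fun s : ℝ => f z + s * ⟪f' z, d⟫ + L / 2 * s ^ 2 * ‖d‖ ^ 2)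
      (⟪f' z, d⟫ + L * t * ‖d‖ ^ 2) t := by
    intro t
    refine ((((hasDerivAt_id t).mul_const ⟪f' z, d⟫).const_add (f z)).add
      (((hasDerivAt_pow 2 t).const_mul (L / 2)).mul_const (‖d‖ ^ 2))).congr_deriv ?_
    simp only [Nat.cast_ofNat]; ring
  have hslope : ∀ t ∈ Ico (0 : ℝ) 1, ⟪f' (z + t • d), d⟫ ≤ ⟪f' z, d⟫ + L * t * ‖d‖ ^ 2 := by
    rintro t ⟨ht, -⟩
    have : ⟪f' (z + t • d) - f' z, d⟫ ≤ L * t * ‖d‖ ^ 2 :=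
      calc ⟪f' (z + t • d) - f' z, d⟫ ≤ ‖f' (z + t • d) - f' z‖ * ‖d‖ := real_inner_le_norm _ _
        _ ≤ L * ‖z + t • d - z‖ * ‖d‖ := by gcongr; exact hlip _ _
        _ = L * t * ‖d‖ ^ 2 := by
          rw [add_sub_cancel_left, norm_smul, Real.norm_of_nonneg ht]; ring
    rw [inner_sub_left] at this
    linarith
  have := image_le_of_deriv_right_le_deriv_boundary
    (fun t _ => (hderiv t).continuousAt.continuousWithinAt)
    (fun t _ => (hderiv t).hasDerivWithinAt) (by simp)
    (fun t _ => (hbound t).continuousAt.continuousWithinAt)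
    (fun t _ => (hbound t).hasDerivWithinAt) hslope (right_mem_Icc.mpr zero_le_one)
  simpa [d] using this

end Gradient

theorem le_of_forall_mem_Ioo_le_add_mul {a b c : ℝ} (h : ∀ t ∈ Ioo (0 : ℝ) 1, a ≤ b + t * c) :
    a ≤ b := by
  have hlim : Tendsto (fun t : ℝ => b + t * c) (𝓝[>] 0) (𝓝 (b + 0 * c)) :=
    ((continuous_const.add (continuous_id.mul continuous_const)).tendsto 0).mono_left
      nhdsWithin_le_nhds
  simpa using ge_of_tendsto hlim (mem_of_superset (Ioo_mem_nhdsGT zero_lt_one) h)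

theorem add_mem_subdiff_add {f₁ f₂ : E → EReal} {x u v : E} (hu : u ∈ subdiff f₁ x)
    (hv : v ∈ subdiff f₂ x) : u + v ∈ subdiff (fun y => f₁ y + f₂ y) x := by
  intro y
  calc f₁ x + f₂ x + ((⟪u + v, y - x⟫ : ℝ) : EReal)
      = (f₁ x + ((⟪u, y - x⟫ : ℝ) : EReal)) + (f₂ x + ((⟪v, y - x⟫ : ℝ) : EReal)) := by
        rw [inner_add_left, EReal.coe_add, add_add_add_comm]
    _ ≤ f₁ y + f₂ y := add_le_add (hu y) (hv y)

theorem add_coe_add_coe_le_of_mem_subdiff {g : E → EReal} {u p z : E} {r s c : ℝ}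
    (hu : u ∈ subdiff g p) (hrs : r + c ≤ ⟪u, z - p⟫ + s) :
    g p + (r : EReal) + (c : EReal) ≤ g z + (s : EReal) :=
  calc g p + (r : EReal) + (c : EReal) = g p + ((r + c : ℝ) : EReal) := by
        rw [add_assoc, EReal.coe_add]
    _ ≤ g p + ((⟪u, z - p⟫ + s : ℝ) : EReal) := by gcongr
    _ = g p + ((⟪u, z - p⟫ : ℝ) : EReal) + (s : EReal) := by rw [EReal.coe_add, add_assoc]
    _ ≤ g z + (s : EReal) := by gcongr; exact hu z

theorem neg_add_inv_smul_mem_subdiff_of_forall_le {g : E → EReal} (hbot : ∀ x, g x ≠ ⊥)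
    (hconv : ∀ x y : E, ∀ t : ℝ, 0 < t → t < 1 →
      g (t • x + (1 - t) • y) ≤ (t : EReal) * g x + ((1 - t : ℝ) : EReal) * g y)
    {v c p : E} {μ : ℝ}
    (hmin : ∀ z, g p + ((⟪v, p - c⟫ + ‖p - c‖ ^ 2 / (2 * μ) : ℝ) : EReal)
      ≤ g z + ((⟪v, z - c⟫ + ‖z - c‖ ^ 2 / (2 * μ) : ℝ) : EReal)) :
    -(v + μ⁻¹ • (p - c)) ∈ subdiff g p := by
  intro y
  rcases eq_or_ne (g y) ⊤ with hy | hy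
  · simp [hy]
  obtain ⟨b, hb⟩ : ∃ b : ℝ, g y = b := ⟨_, (EReal.coe_toReal hy (hbot y)).symm⟩
  obtain ⟨a, ha⟩ : ∃ a : ℝ, g p = a := by
    refine ⟨_, (EReal.coe_toReal (fun hp => ?_) (hbot p)).symm⟩
    have := hmin y
    rw [hp, hb, EReal.top_add_coe, ← EReal.coe_add, top_le_iff] at this
    exact EReal.coe_ne_top _ this
  rw [ha, hb]
  norm_cast
  set d := p - c
  set e := y - p
  refine le_of_forall_mem_Ioo_le_add_mul (c := ‖e‖ ^ 2 / (2 * μ)) fun t ⟨ht0, ht1⟩ => ?_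
  have hseg : t • y + (1 - t) • p - c = d + t • e := by simp only [d, e]; module
  have := (hmin (t • y + (1 - t) • p)).trans (add_le_add (hconv y p t ht0 ht1) le_rfl)
  rw [ha, hb, hseg] at this
  norm_cast at this
  rw [inner_add_right, real_inner_smul_right, norm_add_sq_real, real_inner_smul_right, norm_smul,
    Real.norm_of_nonneg ht0.le] at this
  rw [inner_neg_left, inner_add_left, real_inner_smul_left]
  refine le_of_mul_le_mul_left ?_ ht0
  linear_combination this

theorem stmt8_general (g : H → EReal) (h : H → ℝ) (h' : H → H) (L : ℝ)
    (hgbot : ∀ x, g x ≠ ⊥)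
    (hgconv : ∀ x y : H, ∀ t : ℝ, 0 < t → t < 1 →
      g (t • x + (1 - t) • y) ≤ (t : EReal) * g x + ((1 - t : ℝ) : EReal) * g y)
    (hhconv : ConvexOn ℝ Set.univ h)
    (hhgrad : ∀ z, HasGradientAt h (h' z) z)
    (hhlip : ∀ z w, ‖h' z - h' w‖ ≤ L * ‖z - w‖)
    (lamm lamp : ℝ) (lam : ℕ → ℝ)
    (hlamm : 0 < lamm)
    (hlam : ∀ k, lamm ≤ lam k ∧ lam k ≤ lamp)
    (x : ℕ → H)
    (hiter : ∀ k, ∀ z : H,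
      g (x (k + 1)) +
          ((⟪h' (x k), x (k + 1) - x k⟫ + ‖x (k + 1) - x k‖ ^ 2 / (2 * lam k) : ℝ) : EReal)
        ≤ g z + ((⟪h' (x k), z - x k⟫ + ‖z - x k‖ ^ 2 / (2 * lam k) : ℝ) : EReal)) :
    ∀ k : ℕ,
      (g (x (k + 1)) + (h (x (k + 1)) : EReal) +
          (((1 / lamp - L / 2) * ‖x (k + 1) - x k‖ ^ 2 : ℝ) : EReal)
        ≤ g (x k) + (h (x k) : EReal)) ∧
      ∃ ω ∈ subdiff (fun y => g y + (h y : EReal)) (x (k + 1)),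
        ‖ω‖ ≤ (1 / lamm + L) * ‖x (k + 1) - x k‖ := by
  intro k
  obtain ⟨hlamm_le, hle_lamp⟩ := hlam k
  have hlam_pos : 0 < lam k := hlamm.trans_le hlamm_le
  set d := x (k + 1) - x k
  have hprox : -(h' (x k) + (lam k)⁻¹ • d) ∈ subdiff g (x (k + 1)) :=
    neg_add_inv_smul_mem_subdiff_of_forall_le hgbot hgconv (hiter k)
  refine ⟨add_coe_add_coe_le_of_mem_subdiff hprox ?_, _,
    add_mem_subdiff_add hprox (hhconv.mem_subdiff_of_hasGradientAt (hhgrad _)), ?_⟩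
  · have hdescent := le_add_inner_add_of_lipschitz_gradient hhgrad hhlip (x k) (x (k + 1))
    have hstep : 1 / lamp * ‖d‖ ^ 2 ≤ (lam k)⁻¹ * ‖d‖ ^ 2 := by
      gcongr; rw [one_div]; gcongr
    have hinner : ⟪-(h' (x k) + (lam k)⁻¹ • d), x k - x (k + 1)⟫
        = ⟪h' (x k), d⟫ + (lam k)⁻¹ * ‖d‖ ^ 2 := by
      rw [← neg_sub, inner_neg_neg, inner_add_left, real_inner_smul_left,
        real_inner_self_eq_norm_sq]
    rw [hinner]
    linarith
  · calc ‖-(h' (x k) + (lam k)⁻¹ • d) + h' (x (k + 1))‖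
        = ‖(h' (x (k + 1)) - h' (x k)) - (lam k)⁻¹ • d‖ := by congr 1; abel
      _ ≤ L * ‖d‖ + (lam k)⁻¹ * ‖d‖ := by
        grw [norm_sub_le, hhlip, norm_smul, Real.norm_of_nonneg (inv_nonneg.mpr hlam_pos.le)]
      _ ≤ L * ‖d‖ + 1 / lamm * ‖d‖ := by
        gcongr; rw [one_div]; gcongr
      _ = (1 / lamm + L) * ‖d‖ := by ring

/-- **Proposition 4.2** (the forward–backward splitting method generates
subgradient descent sequences): let `g` be proper lsc convex, `h` convex and
differentiable with `L`-Lipschitz gradient `h'`, `f = g + h`, and let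
`0 < λ⁻ ≤ λ_k ≤ λ⁺ < 2/L`.  If `x₀ ∈ dom g` and each `x_{k+1}` minimizes
`z ↦ g(z) + ⟨∇h(x_k), z − x_k⟩ + ‖z − x_k‖²/(2λ_k)`, then with
`a = 1/λ⁺ − L/2` and `b = 1/λ⁻ + L` the sequence satisfies, for every `k`:
(H1) `f(x_{k+1}) + a‖x_{k+1} − x_k‖² ≤ f(x_k)`, and
(H2) there is `ω ∈ ∂f(x_{k+1})` with `‖ω‖ ≤ b‖x_{k+1} − x_k‖`. -/
theorem stmt8 (g : H → EReal) (h : H → ℝ) (h' : H → H) (L : ℝ) (hL : 0 < L)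
    (hgbot : ∀ x, g x ≠ ⊥) (hgtop : ∃ x, g x ≠ ⊤)
    (hglsc : LowerSemicontinuous g)
    (hgconv : ∀ x y : H, ∀ t : ℝ, 0 < t → t < 1 →
      g (t • x + (1 - t) • y) ≤ (t : EReal) * g x + ((1 - t : ℝ) : EReal) * g y)
    (hhconv : ConvexOn ℝ Set.univ h)
    (hhgrad : ∀ z, HasGradientAt h (h' z) z)
    (hhlip : ∀ z w, ‖h' z - h' w‖ ≤ L * ‖z - w‖)
    (lamm lamp : ℝ) (lam : ℕ → ℝ)
    (hlamm : 0 < lamm) (hlamp : lamp < 2 / L)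
    (hlam : ∀ k, lamm ≤ lam k ∧ lam k ≤ lamp)
    (x : ℕ → H) (hx0 : g (x 0) ≠ ⊤)
    (hiter : ∀ k, ∀ z : H,
      g (x (k + 1)) +
          ((⟪h' (x k), x (k + 1) - x k⟫ + ‖x (k + 1) - x k‖ ^ 2 / (2 * lam k) : ℝ) : EReal)
        ≤ g z + ((⟪h' (x k), z - x k⟫ + ‖z - x k‖ ^ 2 / (2 * lam k) : ℝ) : EReal)) :
    ∀ k : ℕ,
      (g (x (k + 1)) + (h (x (k + 1)) : EReal) +
          (((1 / lamp - L / 2) * ‖x (k + 1) - x k‖ ^ 2 : ℝ) : EReal)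
        ≤ g (x k) + (h (x k) : EReal)) ∧
      ∃ ω ∈ subdiff (fun y => g y + (h y : EReal)) (x (k + 1)),
        ‖ω‖ ≤ (1 / lamm + L) * ‖x (k + 1) - x k‖ :=
  stmt8_general g h h' L hgbot hgconv hhconv hhgrad hhlip lamm lamp lam hlamm hlam x hiter
end
end

section
/- Convergence of subgradient descent methods for convex KL functions: let r̄ > 0 and φ ∈ 𝒦(0,r̄), and assume f satisfies the KL inequality φ′(f(x))·‖∂⁰f(x)‖ ≥ 1 for every x with 0 < f(x) < r̄. Let (x_k)_{k≥0} be a subgradient descent sequence for f with constants a, b > 0 and f(x₀) ≤ r₀ < r̄. Then (x_k) converges strongly to some x* ∈ argmin f, and for every k ≥ 1, ‖x_k − x*‖ ≤ (b/a)·φ(f(x_k)) + √(f(x_{k−1})/a). (Theorem 4.3.) -/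
/-!
Write `r k = f(x_k)` and `d k = ‖x_{k+1} - x_k‖`. Sufficient decrease gives
`a (d (k+1))² ≤ r (k+1) - r (k+2)`; the KL inequality along the sequence and the tangent
inequality of the concave `φ` at `r (k+1)` turn this into
`(d (k+1))² ≤ (b/a) (φ (r (k+1)) - φ (r (k+2))) · d k`, hence by AM-GM
`2 d (k+1) ≤ (b/a) (φ (r (k+1)) - φ (r (k+2))) + d k`. Telescoping bounds the tail
`∑_{i > k} d i` by `(b/a) φ (r (k+1)) + d k`, so `(x_k)` has finite length and converges.
Then `d k → 0`, which together with the KL inequality and the antitonicity of `φ'` forces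
`r k → 0`, and lower semicontinuity puts the limit in `argmin f`.
-/

open Metric Set Filter
open scoped RealInnerProductSpace Topology

noncomputable section

variable {H : Type*} [NormedAddCommGroup H] [InnerProductSpace ℝ H] [CompleteSpace H]

lemma EReal.ne_top_of_add_coe_le {u v : EReal} {c : ℝ} (h : u + c ≤ v) (hv : v ≠ ⊤) : u ≠ ⊤ := by
  rintro rfl
  exact hv (top_le_iff.1 (by simpa only [EReal.top_add_coe] using h))

lemma LowerSemicontinuous.le_of_tendsto_s9 {α γ ι : Type*} [TopologicalSpace α] [LinearOrder γ]
    [TopologicalSpace γ] [OrderTopology γ] [DenselyOrdered γ] {f : α → γ}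
    (hf : LowerSemicontinuous f) {l : Filter ι} [l.NeBot] {u : ι → α} {x : α} {y : γ}
    (hu : Tendsto u l (𝓝 x)) (hfu : Tendsto (fun i => f (u i)) l (𝓝 y)) : f x ≤ y := by
  by_contra! hlt
  obtain ⟨c, hyc, hcf⟩ := exists_between hlt
  obtain ⟨i, hci, hic⟩ :=
    ((hu.eventually (hf x c hcf)).and (hfu.eventually (gt_mem_nhds hyc))).exists
  exact (hci.trans hic).false

namespace ConcaveOn

variable {S : Set ℝ} {φ φ' : ℝ → ℝ}

lemma mul_sub_le_sub_of_hasDerivAt_s9 {s t d : ℝ} (hφ : ConcaveOn ℝ S φ) (hs : s ∈ S) (ht : t ∈ S)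
    (hst : s ≤ t) (hd : HasDerivAt φ d t) : d * (t - s) ≤ φ t - φ s := by
  rcases hst.eq_or_lt with rfl | hlt
  · simp
  · have := hφ.le_slope_of_hasDerivAt hs ht hlt hd
    rwa [slope_def_field, le_div_iff₀ (sub_pos.2 hlt)] at this

lemma antitoneOn_of_hasDerivAt (hφ : ConcaveOn ℝ S φ)
    (hφ' : ∀ s ∈ S, HasDerivAt φ (φ' s) s) : AntitoneOn φ' S := fun s hs t ht hst => by
  simpa only [(hφ' s hs).deriv, (hφ' t ht).deriv] using
    hφ.antitoneOn_deriv (fun u hu => (hφ' u hu).differentiableAt) hs ht hst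

lemma monotoneOn_Ico_of_hasDerivAt {c : ℝ} (hφ : ConcaveOn ℝ (Ico 0 c) φ)
    (hφ' : ∀ s ∈ Ioo 0 c, HasDerivAt φ (φ' s) s) (hpos : ∀ s ∈ Ioo 0 c, 0 ≤ φ' s) :
    MonotoneOn φ (Ico 0 c) := by
  intro s hs t ht hst
  rcases hst.eq_or_lt with rfl | hlt
  · rfl
  have ht' : t ∈ Ioo 0 c := ⟨hs.1.trans_lt hlt, ht.2⟩
  exact sub_nonneg.1 <| (mul_nonneg (hpos t ht') (sub_nonneg.2 hst)).trans
    (hφ.mul_sub_le_sub_of_hasDerivAt_s9 hs ht hst (hφ' t ht'))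

end ConcaveOn

/-- The real shadow of a subgradient descent sequence for a KL function: `r k` stands for
`f (x k)` and `d k` for `‖x (k + 1) - x k‖`. -/
structure IsKLDescent (φ' : ℝ → ℝ) (rbar a b : ℝ) (r d : ℕ → ℝ) : Prop where
  nonneg : ∀ k, 0 ≤ r k
  lt_rbar : ∀ k, r k < rbar
  step_nonneg : ∀ k, 0 ≤ d k
  add_mul_sq_le : ∀ k, r (k + 1) + a * d k ^ 2 ≤ r k
  one_le_kl : ∀ k, 0 < r (k + 1) → 1 ≤ φ' (r (k + 1)) * (b * d k)

namespace IsKLDescent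

variable {φ φ' : ℝ → ℝ} {rbar a b : ℝ} {r d : ℕ → ℝ}

lemma antitone (h : IsKLDescent φ' rbar a b r d) (ha : 0 ≤ a) : Antitone r :=
  antitone_nat_of_succ_le fun k =>
    le_of_add_le_of_nonneg_left (h.add_mul_sq_le k) (mul_nonneg ha (sq_nonneg _))

lemma step_le_sqrt (h : IsKLDescent φ' rbar a b r d) (ha : 0 < a) (k : ℕ) :
    d k ≤ √(r k / a) := by
  rw [Real.le_sqrt (h.step_nonneg k) (div_nonneg (h.nonneg k) ha.le), le_div_iff₀ ha]
  linarith [h.add_mul_sq_le k, h.nonneg (k + 1)]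

lemma two_mul_step_le (h : IsKLDescent φ' rbar a b r d) (ha : 0 < a) (hb : 0 ≤ b)
    (hφ : ConcaveOn ℝ (Ico 0 rbar) φ) (hφ' : ∀ s ∈ Ioo 0 rbar, HasDerivAt φ (φ' s) s)
    (hpos : ∀ s ∈ Ioo 0 rbar, 0 ≤ φ' s) (k : ℕ) :
    2 * d (k + 1) ≤ b / a * (φ (r (k + 1)) - φ (r (k + 2))) + d k := by
  have hmem : ∀ j, r j ∈ Ico 0 rbar := fun j => ⟨h.nonneg j, h.lt_rbar j⟩
  have hst : r (k + 2) ≤ r (k + 1) := h.antitone ha.le (Nat.le_succ _)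
  have hdecr : a * d (k + 1) ^ 2 ≤ r (k + 1) - r (k + 2) := by
    linarith [h.add_mul_sq_le (k + 1)]
  have hdφ : 0 ≤ φ (r (k + 1)) - φ (r (k + 2)) := sub_nonneg.2 <|
    hφ.monotoneOn_Ico_of_hasDerivAt hφ' hpos (hmem _) (hmem _) hst
  have key : a * d (k + 1) ^ 2 ≤ (φ (r (k + 1)) - φ (r (k + 2))) * (b * d k) := by
    rcases (h.nonneg (k + 1)).eq_or_lt with h0 | hr
    · have : r (k + 2) = r (k + 1) := le_antisymm hst (h0 ▸ h.nonneg _)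
      rw [this, sub_self] at hdecr ⊢
      simpa using hdecr
    · have hr' : r (k + 1) ∈ Ioo 0 rbar := ⟨hr, h.lt_rbar _⟩
      calc a * d (k + 1) ^ 2
          ≤ (r (k + 1) - r (k + 2)) * (φ' (r (k + 1)) * (b * d k)) :=
            hdecr.trans (le_mul_of_one_le_right (sub_nonneg.2 hst) (h.one_le_kl k hr))
        _ = φ' (r (k + 1)) * (r (k + 1) - r (k + 2)) * (b * d k) := by ring
        _ ≤ (φ (r (k + 1)) - φ (r (k + 2))) * (b * d k) :=
            mul_le_mul_of_nonneg_right
              (hφ.mul_sub_le_sub_of_hasDerivAt_s9 (hmem _) (hmem _) hst (hφ' _ hr'))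
              (mul_nonneg hb (h.step_nonneg k))
  refine two_mul_le_add_of_sq_le_mul (mul_nonneg (div_nonneg hb ha.le) hdφ) (h.step_nonneg k) ?_
  rw [show b / a * (φ (r (k + 1)) - φ (r (k + 2))) * d k
      = (φ (r (k + 1)) - φ (r (k + 2))) * (b * d k) / a by ring, le_div_iff₀ ha]
  linarith

lemma sum_range_step_le (h : IsKLDescent φ' rbar a b r d) (ha : 0 < a) (hb : 0 ≤ b)
    (hφ : ConcaveOn ℝ (Ico 0 rbar) φ) (hφ' : ∀ s ∈ Ioo 0 rbar, HasDerivAt φ (φ' s) s)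
    (hpos : ∀ s ∈ Ioo 0 rbar, 0 ≤ φ' s) (hφ0 : φ 0 = 0) (k N : ℕ) :
    ∑ i ∈ Finset.range N, d (k + 1 + i) ≤ b / a * φ (r (k + 1)) + d k := by
  -- the telescoping invariant: the tail sum, the last step and the last `φ`-value
  have key : ∀ N, ∑ i ∈ Finset.range N, d (k + 1 + i) + d (k + N) + b / a * φ (r (k + 1 + N))
      ≤ b / a * φ (r (k + 1)) + d k := by
    intro N
    induction N with
    | zero => simp [add_comm]
    | succ N ih =>
      have := h.two_mul_step_le ha hb hφ hφ' hpos (k + N)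
      rw [Finset.sum_range_succ, show k + 1 + (N + 1) = k + N + 2 by omega,
        show k + (N + 1) = k + N + 1 by omega]
      rw [show k + 1 + N = k + N + 1 by omega] at ih ⊢
      linarith
  have hφnn : 0 ≤ φ (r (k + 1 + N)) := hφ0 ▸
    hφ.monotoneOn_Ico_of_hasDerivAt hφ' hpos ⟨le_rfl, (h.nonneg 0).trans_lt (h.lt_rbar 0)⟩
      ⟨h.nonneg _, h.lt_rbar _⟩ (h.nonneg _)
  linarith [key N, h.step_nonneg (k + N), mul_nonneg (div_nonneg hb ha.le) hφnn]

lemma summable (h : IsKLDescent φ' rbar a b r d) (ha : 0 < a) (hb : 0 ≤ b)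
    (hφ : ConcaveOn ℝ (Ico 0 rbar) φ) (hφ' : ∀ s ∈ Ioo 0 rbar, HasDerivAt φ (φ' s) s)
    (hpos : ∀ s ∈ Ioo 0 rbar, 0 ≤ φ' s) (hφ0 : φ 0 = 0) : Summable d := by
  rw [← summable_nat_add_iff 1]
  refine summable_of_sum_range_le (c := b / a * φ (r 1) + d 0) (fun i => h.step_nonneg _)
    fun N => ?_
  simpa only [zero_add, add_comm 1] using h.sum_range_step_le ha hb hφ hφ' hpos hφ0 0 N

lemma tendsto_zero (h : IsKLDescent φ' rbar a b r d) (ha : 0 ≤ a) (hb : 0 ≤ b)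
    (hφ : ConcaveOn ℝ (Ico 0 rbar) φ) (hφ' : ∀ s ∈ Ioo 0 rbar, HasDerivAt φ (φ' s) s)
    (hd : Tendsto d atTop (𝓝 0)) : Tendsto r atTop (𝓝 0) := by
  refine tendsto_order.2 ⟨fun ε hε => .of_forall fun k => hε.trans_le (h.nonneg k),
    fun ε hε => ?_⟩
  by_contra hne
  have hge : ∀ k, ε ≤ r k := fun k => not_lt.1 fun hlt =>
    hne (eventually_atTop.2 ⟨k, fun j hj => (h.antitone ha hj).trans_lt hlt⟩)
  have hε' : ε ∈ Ioo 0 rbar := ⟨hε, (hge 0).trans_lt (h.lt_rbar 0)⟩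
  have hanti := (hφ.subset Ioo_subset_Ico_self (convex_Ioo 0 rbar)).antitoneOn_of_hasDerivAt hφ'
  -- along the sequence `φ'` stays below `φ' ε`, so KL bounds the steps away from `0`
  have hbound : ∀ k, 1 ≤ φ' ε * b * d k := fun k =>
    calc 1 ≤ φ' (r (k + 1)) * (b * d k) := h.one_le_kl k (hε.trans_le (hge _))
      _ ≤ φ' ε * (b * d k) := mul_le_mul_of_nonneg_right
          (hanti hε' ⟨hε.trans_le (hge _), h.lt_rbar _⟩ (hge _)) (mul_nonneg hb (h.step_nonneg k))
      _ = φ' ε * b * d k := by ring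
  have hlim : Tendsto (fun k => φ' ε * b * d k) atTop (𝓝 0) := by
    simpa only [mul_zero] using hd.const_mul (φ' ε * b)
  obtain ⟨k, hk⟩ := (hlim.eventually (gt_mem_nhds one_pos)).exists
  exact (hbound k).not_gt hk

lemma dist_le_of_tendsto {X : Type*} [PseudoMetricSpace X] {x : ℕ → X} {xstar : X}
    (h : IsKLDescent φ' rbar a b r fun k => dist (x k) (x (k + 1))) (ha : 0 < a) (hb : 0 ≤ b)
    (hφ : ConcaveOn ℝ (Ico 0 rbar) φ) (hφ' : ∀ s ∈ Ioo 0 rbar, HasDerivAt φ (φ' s) s)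
    (hpos : ∀ s ∈ Ioo 0 rbar, 0 ≤ φ' s) (hφ0 : φ 0 = 0) (hx : Tendsto x atTop (𝓝 xstar))
    (k : ℕ) : dist (x (k + 1)) xstar ≤ b / a * φ (r (k + 1)) + √(r k / a) :=
  calc dist (x (k + 1)) xstar ≤ ∑' m, dist (x (k + 1 + m)) (x (k + 1 + m + 1)) :=
        dist_le_tsum_of_dist_le_of_tendsto _ (fun _ => le_rfl)
          (h.summable ha hb hφ hφ' hpos hφ0) hx (k + 1)
    _ ≤ b / a * φ (r (k + 1)) + dist (x k) (x (k + 1)) :=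
        Real.tsum_le_of_sum_range_le (fun _ => dist_nonneg)
          (h.sum_range_step_le ha hb hφ hφ' hpos hφ0 k)
    _ ≤ b / a * φ (r (k + 1)) + √(r k / a) := add_le_add_right (h.step_le_sqrt ha k) _

end IsKLDescent

lemma isKLDescent_of_subdiff {E : Type*} [NormedAddCommGroup E] [InnerProductSpace ℝ E]
    {f : E → EReal} {φ' : ℝ → ℝ} {rbar a b : ℝ} {x : ℕ → E}
    (hbot : ∀ y, f y ≠ ⊥) (hnonneg : ∀ y, 0 ≤ f y)
    (hKL : ∀ y, 0 < f y → f y < (rbar : EReal) → ∀ u ∈ subdiff f y, 1 ≤ φ' (f y).toReal * ‖u‖)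
    (hpos : ∀ s ∈ Ioo (0 : ℝ) rbar, 0 ≤ φ' s) (ha : 0 ≤ a) (hfin : ∀ k, f (x k) ≠ ⊤)
    (hH1 : ∀ k, f (x (k + 1)) + ((a * ‖x (k + 1) - x k‖ ^ 2 : ℝ) : EReal) ≤ f (x k))
    (hH2 : ∀ k, ∃ ω ∈ subdiff f (x (k + 1)), ‖ω‖ ≤ b * ‖x (k + 1) - x k‖)
    (hx0 : f (x 0) < (rbar : EReal)) :
    IsKLDescent φ' rbar a b (fun k => (f (x k)).toReal) fun k => dist (x k) (x (k + 1)) := by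
  have hcoe : ∀ k, f (x k) = ((f (x k)).toReal : EReal) := fun k =>
    (EReal.coe_toReal (hfin k) (hbot _)).symm
  have hdecr : ∀ k, (f (x (k + 1))).toReal + a * dist (x k) (x (k + 1)) ^ 2 ≤ (f (x k)).toReal := by
    intro k
    have := hH1 k
    rwa [hcoe k, hcoe (k + 1), ← EReal.coe_add, EReal.coe_le_coe_iff, ← dist_eq_norm,
      dist_comm] at this
  have hanti : Antitone fun k => (f (x k)).toReal := antitone_nat_of_succ_le fun k =>
    le_of_add_le_of_nonneg_left (hdecr k) (mul_nonneg ha (sq_nonneg _))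
  have hlt : ∀ k, (f (x k)).toReal < rbar := fun k =>
    (hanti (Nat.zero_le k)).trans_lt (EReal.coe_lt_coe_iff.1 (by rwa [← hcoe 0]))
  refine ⟨fun k => EReal.toReal_nonneg (hnonneg _), hlt, fun _ => dist_nonneg, hdecr,
    fun k hk => ?_⟩
  obtain ⟨ω, hω, hωb⟩ := hH2 k
  have hKLk := hKL _ (by rw [hcoe]; exact_mod_cast hk) (by rw [hcoe]; exact_mod_cast hlt _) ω hω
  rw [dist_comm, dist_eq_norm]
  exact hKLk.trans (mul_le_mul_of_nonneg_left hωb (hpos _ ⟨hk, hlt _⟩))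

theorem stmt9_general (f : H → EReal)
    (hbot : ∀ x, f x ≠ ⊥)
    (hlsc : LowerSemicontinuous f)
    (hmin : ∃ z, z ∈ argminSet f ∧ f z = 0)
    (rbar : ℝ)
    (φ φ' : ℝ → ℝ)
    (hφderiv : ∀ s ∈ Ioo (0 : ℝ) rbar, HasDerivAt φ (φ' s) s)
    (hφconc : ConcaveOn ℝ (Ico 0 rbar) φ)
    (hφ0 : φ 0 = 0)
    (hφ'pos : ∀ s ∈ Ioo (0 : ℝ) rbar, 0 < φ' s)
    (hKL : ∀ x, 0 < f x → f x < (rbar : EReal) →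
      ∀ u ∈ subdiff f x, 1 ≤ φ' ((f x).toReal) * ‖u‖)
    (a b : ℝ) (ha : 0 < a) (hb : 0 < b)
    (x : ℕ → H) (hxdom : f (x 0) ≠ ⊤)
    (hH1 : ∀ k : ℕ, f (x (k + 1)) + ((a * ‖x (k + 1) - x k‖ ^ 2 : ℝ) : EReal) ≤ f (x k))
    (hH2 : ∀ k : ℕ, ∃ ω ∈ subdiff f (x (k + 1)), ‖ω‖ ≤ b * ‖x (k + 1) - x k‖)
    (r0 : ℝ) (hr0 : r0 < rbar) (hfx0 : f (x 0) ≤ (r0 : EReal)) :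
    ∃ xstar ∈ argminSet f, Tendsto x atTop (nhds xstar) ∧
      ∀ k : ℕ, ‖x (k + 1) - xstar‖ ≤
        (b / a) * φ ((f (x (k + 1))).toReal) + Real.sqrt ((f (x k)).toReal / a) := by
  obtain ⟨z, hz, hfz⟩ := hmin
  have hnonneg : ∀ y, 0 ≤ f y := fun y => hfz ▸ hz y
  have hpos : ∀ s ∈ Ioo 0 rbar, 0 ≤ φ' s := fun s hs => (hφ'pos s hs).le
  have hfin : ∀ k, f (x k) ≠ ⊤ := by
    intro k
    induction k with
    | zero => exact hxdom
    | succ k ih => exact EReal.ne_top_of_add_coe_le (hH1 k) ih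
  have hdesc := isKLDescent_of_subdiff hbot hnonneg hKL hpos ha.le hfin hH1 hH2
    (hfx0.trans_lt (EReal.coe_lt_coe_iff.2 hr0))
  have hsum := hdesc.summable ha hb.le hφconc hφderiv hpos hφ0
  obtain ⟨xstar, hx⟩ := cauchySeq_tendsto_of_complete (cauchySeq_of_summable_dist hsum)
  have hfx : Tendsto (fun k => f (x k)) atTop (𝓝 0) := by
    have := EReal.tendsto_coe.2 (hdesc.tendsto_zero ha.le hb.le hφconc hφderiv
      hsum.tendsto_atTop_zero)
    simpa only [EReal.coe_toReal (hfin _) (hbot _), EReal.coe_zero] using this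
  refine ⟨xstar, fun y => (hlsc.le_of_tendsto_s9 hx hfx).trans (hnonneg y), hx, fun k => ?_⟩
  rw [← dist_eq_norm]
  exact hdesc.dist_le_of_tendsto ha hb.le hφconc hφderiv hpos hφ0 hx k

/-- **Theorem 4.3** (convergence of subgradient descent methods for convex KL
functions): assume `f` is proper lsc convex with `min f = 0`, satisfies the KL
inequality `φ'(f(x))·‖∂⁰f(x)‖ ≥ 1` on `[0 < f < r̄]` for `φ ∈ 𝒦(0,r̄)`, and
`(x_k)` is a subgradient descent sequence (constants `a, b > 0`) with
`f(x₀) ≤ r₀ < r̄`.  Then `x_k` converges strongly to some `x* ∈ argmin f`, and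
`‖x_k − x*‖ ≤ (b/a)·φ(f(x_k)) + √(f(x_{k−1})/a)` for every `k ≥ 1`
(stated below with the index shift `k ↦ k+1`). -/
theorem stmt9 (f : H → EReal)
    (hbot : ∀ x, f x ≠ ⊥) (htop : ∃ x, f x ≠ ⊤)
    (hlsc : LowerSemicontinuous f)
    (hconv : ∀ x y : H, ∀ t : ℝ, 0 < t → t < 1 →
      f (t • x + (1 - t) • y) ≤ (t : EReal) * f x + ((1 - t : ℝ) : EReal) * f y)
    (hmin : ∃ z, z ∈ argminSet f ∧ f z = 0)
    (rbar : ℝ) (hrbar : 0 < rbar)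
    (φ φ' : ℝ → ℝ)
    (hφcont : ContinuousOn φ (Ico 0 rbar))
    (hφderiv : ∀ s ∈ Ioo (0 : ℝ) rbar, HasDerivAt φ (φ' s) s)
    (hφ'cont : ContinuousOn φ' (Ioo 0 rbar))
    (hφconc : ConcaveOn ℝ (Ico 0 rbar) φ)
    (hφ0 : φ 0 = 0)
    (hφ'pos : ∀ s ∈ Ioo (0 : ℝ) rbar, 0 < φ' s)
    (hKL : ∀ x, 0 < f x → f x < (rbar : EReal) →
      ∀ u ∈ subdiff f x, 1 ≤ φ' ((f x).toReal) * ‖u‖)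
    (a b : ℝ) (ha : 0 < a) (hb : 0 < b)
    (x : ℕ → H) (hxdom : f (x 0) ≠ ⊤)
    (hH1 : ∀ k : ℕ, f (x (k + 1)) + ((a * ‖x (k + 1) - x k‖ ^ 2 : ℝ) : EReal) ≤ f (x k))
    (hH2 : ∀ k : ℕ, ∃ ω ∈ subdiff f (x (k + 1)), ‖ω‖ ≤ b * ‖x (k + 1) - x k‖)
    (r0 : ℝ) (hr0 : r0 < rbar) (hfx0 : f (x 0) ≤ (r0 : EReal)) :
    ∃ xstar ∈ argminSet f, Tendsto x atTop (nhds xstar) ∧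
      ∀ k : ℕ, ‖x (k + 1) - xstar‖ ≤
        (b / a) * φ ((f (x (k + 1))).toReal) + Real.sqrt ((f (x k)).toReal / a) :=
  stmt9_general f hbot hlsc hmin rbar φ φ' hφderiv hφconc hφ0 hφ'pos hKL a b ha hb x hxdom hH1 hH2
    r0 hr0 hfx0
end
end

section
/- Complexity of descent sequences for convex KL functions via the one-dimensional worst-case proximal sequence: let r̄ > 0 and φ ∈ 𝒦(0,r̄), and assume f satisfies the KL inequality φ′(f(x))·‖∂⁰f(x)‖ ≥ 1 for every x with 0 < f(x) < r̄. Let (x_k)_{k≥0} be a subgradient descent sequence for f with constants a, b > 0 and f(x₀) = r₀ ∈ (0,r̄). Set α₀ = φ(r₀) and let ψ = (φ|_{[0,r₀]})^{−1} : [0,α₀] → [0,r₀]; assume (A): ψ′ is Lipschitz continuous on [0,α₀] with constant ℓ > 0 and ψ′(0) = 0. Set ζ = (√(1 + 2ℓ a b^{−2}) − 1)/ℓ, and for k ≥ 0 let α_{k+1} be the unique minimizer over u ∈ [0,α₀] of u ↦ ψ(u) + (u − α_k)²/(2ζ). Then (x_k) converges strongly to some x* ∈ argmin f, f(x_k) ≤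 ψ(α_k) for all k ≥ 0, and ‖x_k − x*‖ ≤ (b/a)·α_k + √(ψ(α_{k−1})/a) for all k ≥ 1. (Theorem 4.4.) -/
/-!
Write `r_k = f(x_k)`, `β_k = φ(r_k)` and `d_k = ‖x_{k+1} - x_k‖`. Along the sequence the KL
inequality reads `1 ≤ φ'(r_{k+1}) b d_k`, and concavity of `φ` turns sufficient decrease into
`a d_{k+1}² ≤ (β_{k+1} - β_{k+2}) b d_k`, hence `2 d_{k+1} ≤ d_k + (b/a)(β_{k+1} - β_{k+2})`.
Telescoping gives `∑_{j>k} d_j ≤ d_k + (b/a) β_{k+1}`, so `(x_k)` is Cauchy; the values tend to `0`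
by KL again, and lower semicontinuity makes the limit a minimizer.

The rates follow from `β_k ≤ α_k`, proved by induction. The slope
`s = ψ'(β_{k+1}) = 1/φ'(r_{k+1})` is at most `b d_k`, so sufficient decrease and the descent lemma
for the `ℓ`-smooth `ψ` give `(a/b²) s² ≤ s δ + (ℓ/2) δ²` with `δ = β_k - β_{k+1}`; `ζ` is precisely
the root of `(ℓ/2) ζ² + ζ = a/b²`, so this forces `δ ≥ ζ s`. By concavity of `φ`, `s` is a
subgradient of `ψ` at `β_{k+1}`, so optimality of `α_{k+1}` in the proximal problem rules out
`α_{k+1} < β_{k+1}`.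
-/

open Metric Set Filter
open scoped RealInnerProductSpace

noncomputable section

variable {H : Type*} [NormedAddCommGroup H] [InnerProductSpace ℝ H] [CompleteSpace H]

open scoped Topology

theorem ConcaveOn.le_add_mul_sub_of_hasDerivAt {S : Set ℝ} {f : ℝ → ℝ} {f' x y : ℝ}
    (hf : ConcaveOn ℝ S f) (hx : x ∈ S) (hy : y ∈ S) (hf' : HasDerivAt f f' x) :
    f y ≤ f x + f' * (y - x) := by
  rcases lt_trichotomy x y with hxy | rfl | hyx
  · have h := hf.slope_le_of_hasDerivAt hx hy hxy hf'
    rw [slope_def_field, div_le_iff₀ (sub_pos.2 hxy)] at h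
    linarith
  · simp
  · have h := hf.le_slope_of_hasDerivAt hy hx hyx hf'
    rw [slope_def_field, le_div_iff₀ (sub_pos.2 hyx)] at h
    linarith

theorem ConcaveOn.monotoneOn_of_hasDerivAt_nonneg {f f' : ℝ → ℝ} {a b : ℝ}
    (hf : ConcaveOn ℝ (Ico a b) f) (hd : ∀ x ∈ Ioo a b, HasDerivAt f (f' x) x)
    (hpos : ∀ x ∈ Ioo a b, 0 ≤ f' x) : MonotoneOn f (Ico a b) := by
  intro x hx y hy hxy
  rcases hxy.eq_or_lt with rfl | hlt
  · rfl
  have hy' : y ∈ Ioo a b := ⟨hx.1.trans_lt hlt, hy.2⟩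
  have h := hf.le_add_mul_sub_of_hasDerivAt hy hx (hd y hy')
  nlinarith [hpos y hy']

theorem ConcaveOn.antitoneOn_of_hasDerivAt_s10 {S : Set ℝ} {f f' : ℝ → ℝ} (hf : ConcaveOn ℝ S f)
    (hd : ∀ x ∈ S, HasDerivAt f (f' x) x) : AntitoneOn f' S := fun x hx y hy hxy => by
  simpa only [(hd x hx).deriv, (hd y hy).deriv] using
    hf.antitoneOn_deriv (fun z hz => (hd z hz).differentiableAt) hx hy hxy

theorem le_add_mul_sub_add_sq_of_lipschitzOn_deriv {ψ ψ' : ℝ → ℝ} {S : Set ℝ} {ℓ u v : ℝ}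
    (hS : S.OrdConnected) (hu : u ∈ S) (hv : v ∈ S) (huv : u ≤ v)
    (hψ : ∀ t ∈ S, HasDerivWithinAt ψ (ψ' t) S t)
    (hlip : ∀ t ∈ S, ∀ t' ∈ S, |ψ' t - ψ' t'| ≤ ℓ * |t - t'|) :
    ψ v ≤ ψ u + ψ' u * (v - u) + ℓ / 2 * (v - u) ^ 2 := by
  have hsub : Icc u v ⊆ S := hS.out hu hv
  let g : ℝ → ℝ := fun t => ψ t - ψ' u * (t - u) - ℓ / 2 * (t - u) ^ 2
  have hg : ∀ t ∈ Icc u v,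
      HasDerivWithinAt g (ψ' t - ψ' u - ℓ * (t - u)) (Icc u v) t := fun t ht => by
    have hlin := (hasDerivAt_id' t).hasDerivWithinAt.sub_const u (s := Icc u v)
    exact (((hψ t (hsub ht)).mono hsub).sub (hlin.const_mul (ψ' u))).sub
      ((hlin.pow 2).const_mul (ℓ / 2)) |>.congr_deriv (by simp; ring)
  have hanti : AntitoneOn g (Icc u v) := by
    refine antitoneOn_of_hasDerivWithinAt_nonpos (f' := fun t => ψ' t - ψ' u - ℓ * (t - u))
      (convex_Icc u v) (fun t ht => (hg t ht).continuousWithinAt) (fun t ht => ?_) fun t ht => ?_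
    · rw [interior_Icc] at ht ⊢
      exact (hg t (Ioo_subset_Icc_self ht)).mono Ioo_subset_Icc_self
    · rw [interior_Icc] at ht
      have h := hlip t (hsub (Ioo_subset_Icc_self ht)) u hu
      rw [abs_of_pos (sub_pos.2 ht.1)] at h
      linarith [le_abs_self (ψ' t - ψ' u)]
  have h := hanti (left_mem_Icc.2 huv) (right_mem_Icc.2 huv) huv
  simp only [g, sub_self] at h
  linarith

theorem quadratic_pos_root {ℓ c ζ : ℝ} (hℓ : 0 < ℓ) (hc : 0 < c)
    (hζ : ζ = (√(1 + 2 * ℓ * c) - 1) / ℓ) : 0 < ζ ∧ ℓ / 2 * ζ ^ 2 + ζ = c := by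
  have hsq : √(1 + 2 * ℓ * c) ^ 2 = 1 + 2 * ℓ * c := Real.sq_sqrt (by positivity)
  have hgt : 1 < √(1 + 2 * ℓ * c) := (Real.lt_sqrt zero_le_one).2 (by nlinarith)
  subst hζ
  generalize √(1 + 2 * ℓ * c) = S at hsq hgt ⊢
  refine ⟨div_pos (by linarith) hℓ, ?_⟩
  field_simp
  nlinarith

theorem mul_le_of_quadratic_le {ℓ ζ s δ : ℝ} (hℓ : 0 ≤ ℓ) (hs : 0 ≤ s) (hδ : 0 ≤ δ)
    (h : (ℓ / 2 * ζ ^ 2 + ζ) * s ^ 2 ≤ s * δ + ℓ / 2 * δ ^ 2) : ζ * s ≤ δ := by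
  by_contra! hlt
  have hs' : 0 < s := hs.lt_of_ne (by rintro rfl; linarith)
  nlinarith [mul_lt_mul_of_pos_left hlt hs',
    mul_le_mul_of_nonneg_left (pow_le_pow_left₀ hδ hlt.le 2) hℓ]

theorem le_of_prox_min {g : ℝ → ℝ} {I : Set ℝ} {ζ α u B s : ℝ} (hζ : 0 < ζ)
    (hmin : ∀ v ∈ I, g u + (u - α) ^ 2 / (2 * ζ) ≤ g v + (v - α) ^ 2 / (2 * ζ))
    (hB : B ∈ I) (hgap : ζ * s ≤ α - B) (hsub : u < B → g B - g u ≤ s * (B - u)) : B ≤ u := by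
  by_contra! hlt
  have h : (u - α) ^ 2 - (B - α) ^ 2 ≤ (g B - g u) * (2 * ζ) := by
    rw [← div_le_iff₀ (by positivity), sub_div]
    linarith [hmin B hB]
  nlinarith [mul_le_mul_of_nonneg_right (hsub hlt) (by positivity : 0 ≤ 2 * ζ)]

theorem mul_eq_one_of_leftInvOn {φ ψ : ℝ → ℝ} {φ' ψ' x : ℝ} {s t : Set ℝ} (hx : x ∈ s)
    (hs : UniqueDiffWithinAt ℝ s x) (hinv : ∀ y ∈ s, ψ (φ y) = y) (hmaps : MapsTo φ s t)
    (hψ : HasDerivWithinAt ψ ψ' t (φ x)) (hφ : HasDerivWithinAt φ φ' s x) : ψ' * φ' = 1 :=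
  hs.eq_deriv _ (hψ.comp x hφ hmaps) ((hasDerivWithinAt_id x s).congr hinv (hinv x hx))

theorem le_inv_of_map_le {φ ψ : ℝ → ℝ} {s t : Set ℝ} {ρ u : ℝ} (hφ : MonotoneOn φ s)
    (hψ : MapsTo ψ t s) (hψφ : ∀ x ∈ s, ψ (φ x) = x) (hφψ : ∀ y ∈ t, φ (ψ y) = y)
    (hρ : ρ ∈ s) (hu : u ∈ t) (h : φ ρ ≤ u) : ρ ≤ ψ u := by
  by_contra! hlt
  have hle := hφψ u hu ▸ hφ (hψ hu) hρ hlt.le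
  exact hlt.ne (by rw [← le_antisymm h hle, hψφ ρ hρ])

theorem map_le_prox_of_step {φ φ' ψ ψ' : ℝ → ℝ} {R r0 ℓ ζ a b ρ₀ ρ₁ δ α₀ α₁ : ℝ}
    (hφconc : ConcaveOn ℝ (Ico 0 R) φ) (hφderiv : ∀ s ∈ Ioo 0 R, HasDerivAt φ (φ' s) s)
    (hφ'pos : ∀ s ∈ Ioo 0 R, 0 < φ' s) (hφ0 : φ 0 = 0) (hr0 : r0 < R)
    (hψφ : ∀ s ∈ Icc 0 r0, ψ (φ s) = s) (hφψ : ∀ u ∈ Icc 0 (φ r0), φ (ψ u) = u)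
    (hψmem : ∀ u ∈ Icc 0 (φ r0), ψ u ∈ Icc 0 r0)
    (hψderiv : ∀ u ∈ Icc 0 (φ r0), HasDerivWithinAt ψ (ψ' u) (Icc 0 (φ r0)) u)
    (hψ'lip : ∀ u ∈ Icc 0 (φ r0), ∀ v ∈ Icc 0 (φ r0), |ψ' u - ψ' v| ≤ ℓ * |u - v|)
    (hℓ : 0 ≤ ℓ) (hζ : 0 < ζ) (hζeq : ℓ / 2 * ζ ^ 2 + ζ = a / b ^ 2) (ha : 0 ≤ a) (hb : 0 < b)
    (hρ₀ : ρ₀ ∈ Icc 0 r0) (hρ₁ : ρ₁ ∈ Icc 0 r0) (hstep : ρ₁ + a * δ ^ 2 ≤ ρ₀)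
    (hkl : 0 < ρ₁ → 1 ≤ φ' ρ₁ * (b * δ)) (hα₀ : φ ρ₀ ≤ α₀) (hα₁ : α₁ ∈ Icc 0 (φ r0))
    (hmin : ∀ u ∈ Icc 0 (φ r0),
      ψ α₁ + (α₁ - α₀) ^ 2 / (2 * ζ) ≤ ψ u + (u - α₀) ^ 2 / (2 * ζ)) :
    φ ρ₁ ≤ α₁ := by
  rcases hρ₁.1.eq_or_lt with rfl | hρ
  · rw [hφ0]; exact hα₁.1
  have hIco : Icc 0 r0 ⊆ Ico 0 R := fun s hs => ⟨hs.1, hs.2.trans_lt hr0⟩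
  have hmono : MonotoneOn φ (Icc 0 r0) :=
    (hφconc.monotoneOn_of_hasDerivAt_nonneg hφderiv fun s hs => (hφ'pos s hs).le).mono hIco
  have hmaps : MapsTo φ (Icc 0 r0) (Icc 0 (φ r0)) := by simpa only [hφ0] using hmono.mapsTo_Icc
  have hρR : ρ₁ ∈ Ioo 0 R := ⟨hρ, hρ₁.2.trans_lt hr0⟩
  have hchain : ψ' (φ ρ₁) * φ' ρ₁ = 1 :=
    mul_eq_one_of_leftInvOn hρ₁ (uniqueDiffOn_Icc (hρ.trans_le hρ₁.2) _ hρ₁) hψφ hmaps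
      (hψderiv _ (hmaps hρ₁)) (hφderiv ρ₁ hρR).hasDerivWithinAt
  set s := ψ' (φ ρ₁)
  have hs : 0 < s := pos_of_mul_pos_left (hchain ▸ one_pos) (hφ'pos ρ₁ hρR).le
  have hsb : s ≤ b * δ := by nlinarith [hkl hρ, hφ'pos ρ₁ hρR]
  have hδ : φ ρ₁ ≤ φ ρ₀ := hmono hρ₁ hρ₀ (by nlinarith [sq_nonneg δ])
  have hgap : ζ * s ≤ φ ρ₀ - φ ρ₁ := by
    refine mul_le_of_quadratic_le hℓ hs.le (sub_nonneg.2 hδ) ?_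
    have hdesc := le_add_mul_sub_add_sq_of_lipschitzOn_deriv ordConnected_Icc
      (hmaps hρ₁) (hmaps hρ₀) hδ hψderiv hψ'lip
    rw [hψφ _ hρ₀, hψφ _ hρ₁] at hdesc
    have hsq : s ^ 2 ≤ b ^ 2 * δ ^ 2 := by nlinarith
    calc (ℓ / 2 * ζ ^ 2 + ζ) * s ^ 2 ≤ a / b ^ 2 * (b ^ 2 * δ ^ 2) := by
          rw [hζeq]; exact mul_le_mul_of_nonneg_left hsq (by positivity)
      _ = a * δ ^ 2 := by field_simp
      _ ≤ ρ₀ - ρ₁ := by linarith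
      _ ≤ s * (φ ρ₀ - φ ρ₁) + ℓ / 2 * (φ ρ₀ - φ ρ₁) ^ 2 := by linarith
  refine le_of_prox_min hζ hmin (hmaps hρ₁) (by linarith : ζ * s ≤ α₀ - φ ρ₁) fun _ => ?_
  have htangent := hφconc.le_add_mul_sub_of_hasDerivAt (hIco hρ₁) (hIco (hψmem _ hα₁))
    (hφderiv ρ₁ hρR)
  rw [hφψ _ hα₁] at htangent
  calc ψ (φ ρ₁) - ψ α₁ = s * (φ' ρ₁ * (ρ₁ - ψ α₁)) := by
        rw [← mul_assoc, hchain, one_mul, hψφ _ hρ₁]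
    _ ≤ s * (φ ρ₁ - α₁) := mul_le_mul_of_nonneg_left (by linarith) hs.le

theorem map_le_prox_and_le_inv_of_kl {φ φ' ψ ψ' : ℝ → ℝ} {R r0 ℓ ζ a b : ℝ} {r d α : ℕ → ℝ}
    (hφconc : ConcaveOn ℝ (Ico 0 R) φ) (hφderiv : ∀ s ∈ Ioo 0 R, HasDerivAt φ (φ' s) s)
    (hφ'pos : ∀ s ∈ Ioo 0 R, 0 < φ' s) (hφ0 : φ 0 = 0) (hr0 : r0 < R)
    (hψφ : ∀ s ∈ Icc 0 r0, ψ (φ s) = s) (hφψ : ∀ u ∈ Icc 0 (φ r0), φ (ψ u) = u)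
    (hψmem : ∀ u ∈ Icc 0 (φ r0), ψ u ∈ Icc 0 r0)
    (hψderiv : ∀ u ∈ Icc 0 (φ r0), HasDerivWithinAt ψ (ψ' u) (Icc 0 (φ r0)) u)
    (hψ'lip : ∀ u ∈ Icc 0 (φ r0), ∀ v ∈ Icc 0 (φ r0), |ψ' u - ψ' v| ≤ ℓ * |u - v|)
    (hℓ : 0 < ℓ) (ha : 0 < a) (hb : 0 < b) (hζ : ζ = (√(1 + 2 * ℓ * a / b ^ 2) - 1) / ℓ)
    (hr : ∀ k, r k ∈ Icc 0 r0) (hr00 : r 0 = r0) (hstep : ∀ k, r (k + 1) + a * d k ^ 2 ≤ r k)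
    (hkl : ∀ k, 0 < r (k + 1) → 1 ≤ φ' (r (k + 1)) * (b * d k))
    (hα0 : α 0 = φ r0) (hαmem : ∀ k, α (k + 1) ∈ Icc 0 (φ r0))
    (hαmin : ∀ k, ∀ u ∈ Icc 0 (φ r0),
      ψ (α (k + 1)) + (α (k + 1) - α k) ^ 2 / (2 * ζ) ≤ ψ u + (u - α k) ^ 2 / (2 * ζ)) :
    ∀ k, φ (r k) ≤ α k ∧ r k ≤ ψ (α k) := by
  rw [mul_div_assoc] at hζ
  obtain ⟨hζpos, hζeq⟩ := quadratic_pos_root hℓ (by positivity) hζ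
  have hφα : ∀ k, φ (r k) ≤ α k := by
    intro k
    induction k with
    | zero => rw [hr00, hα0]
    | succ k ih =>
      exact map_le_prox_of_step hφconc hφderiv hφ'pos hφ0 hr0 hψφ hφψ hψmem hψderiv hψ'lip
        hℓ.le hζpos hζeq ha.le hb (hr k) (hr (k + 1)) (hstep k) (hkl k) ih (hαmem k) (hαmin k)
  have hmono : MonotoneOn φ (Icc 0 r0) :=
    (hφconc.monotoneOn_of_hasDerivAt_nonneg hφderiv fun s hs => (hφ'pos s hs).le).mono
      fun s hs => ⟨hs.1, hs.2.trans_lt hr0⟩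
  refine fun k => ⟨hφα k, ?_⟩
  cases k with
  | zero => rw [hα0, hψφ r0 (hr00 ▸ hr 0), hr00]
  | succ k => exact le_inv_of_map_le hmono hψmem hψφ hφψ (hr _) (hαmem k) (hφα _)

theorem two_mul_le_add_of_sq_le {a b c d₀ d₁ ρ Δ : ℝ} (ha : 0 < a) (hc : 0 < c) (hd₀ : 0 ≤ d₀)
    (hdesc : a * d₁ ^ 2 ≤ ρ) (htangent : c * ρ ≤ Δ) (hkl : 1 ≤ c * (b * d₀)) :
    2 * d₁ ≤ d₀ + b / a * Δ := by
  have hρ : 0 ≤ ρ := le_trans (by positivity) hdesc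
  have hb : 0 < b := by
    by_contra! hb
    nlinarith [mul_nonneg hc.le (mul_nonneg (neg_nonneg.2 hb) hd₀)]
  have hΔ : 0 ≤ Δ := le_trans (by positivity) htangent
  have hsq : d₁ ^ 2 ≤ d₀ * (b / a * Δ) := by
    refine le_of_mul_le_mul_left ?_ ha
    calc a * d₁ ^ 2 ≤ c * ρ * (b * d₀) := by nlinarith
      _ ≤ Δ * (b * d₀) := mul_le_mul_of_nonneg_right htangent (by positivity)
      _ = a * (d₀ * (b / a * Δ)) := by field_simp
  nlinarith [sq_nonneg (d₀ - b / a * Δ), show 0 ≤ b / a * Δ by positivity]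

theorem sum_range_le_of_two_mul_le {d e : ℕ → ℝ} (hd : ∀ i, 0 ≤ d i) (he : ∀ i, 0 ≤ e i)
    (h : ∀ i, 2 * d (i + 1) ≤ d i + (e i - e (i + 1))) (k n : ℕ) :
    ∑ j ∈ Finset.range n, d (k + 1 + j) ≤ d k + e k := by
  suffices ∑ j ∈ Finset.range n, d (k + 1 + j) + d (k + n) ≤ d k + e k - e (k + n) by
    linarith [hd (k + n), he (k + n)]
  induction n with
  | zero => simp
  | succ n ih =>
    rw [Finset.sum_range_succ, ← add_assoc, add_right_comm k 1 n]
    linarith [h (k + n)]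

theorem tendsto_zero_of_one_le_mul {φ' : ℝ → ℝ} {R : ℝ} {r g : ℕ → ℝ}
    (hφ' : AntitoneOn φ' (Ioo 0 R)) (hr : Antitone r) (hr0 : ∀ k, 0 ≤ r k) (hR : r 0 < R)
    (hg0 : ∀ k, 0 ≤ g k) (hg : Tendsto g atTop (𝓝 0))
    (hkl : ∀ k, 0 < r (k + 1) → 1 ≤ φ' (r (k + 1)) * g k) : Tendsto r atTop (𝓝 0) := by
  have hbdd : BddBelow (range r) := ⟨0, by rintro _ ⟨k, rfl⟩; exact hr0 k⟩
  have hlim := tendsto_atTop_ciInf hr hbdd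
  set L := ⨅ k, r k
  suffices hL : L = 0 by rwa [hL] at hlim
  by_contra hne
  have hL : 0 < L := (le_ciInf hr0).lt_of_ne' hne
  have hLr : ∀ k, L ≤ r k := ciInf_le hbdd
  have hmem : ∀ k, r k ∈ Ioo 0 R := fun k =>
    ⟨hL.trans_le (hLr k), (hr (Nat.zero_le k)).trans_lt hR⟩
  have hbound : ∀ k, 1 ≤ φ' L * g k := fun k =>
    (hkl k (hmem (k + 1)).1).trans <| mul_le_mul_of_nonneg_right
      (hφ' ⟨hL, (hLr 0).trans_lt hR⟩ (hmem (k + 1)) (hLr (k + 1))) (hg0 k)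
  have h0 : Tendsto (fun k => φ' L * g k) atTop (𝓝 0) := by simpa using hg.const_mul (φ' L)
  obtain ⟨k, hk⟩ := (h0.eventually_lt_const one_pos).exists
  linarith [hbound k]

theorem summable_tsum_le_tendsto_of_kl {φ φ' : ℝ → ℝ} {R a b : ℝ} {r d : ℕ → ℝ}
    (hφconc : ConcaveOn ℝ (Ico 0 R) φ) (hφderiv : ∀ s ∈ Ioo 0 R, HasDerivAt φ (φ' s) s)
    (hφ'pos : ∀ s ∈ Ioo 0 R, 0 < φ' s) (hφ0 : φ 0 = 0) (ha : 0 < a) (hb : 0 ≤ b)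
    (hr : ∀ k, r k ∈ Ico 0 R) (hd : ∀ k, 0 ≤ d k) (hstep : ∀ k, r (k + 1) + a * d k ^ 2 ≤ r k)
    (hkl : ∀ k, 0 < r (k + 1) → 1 ≤ φ' (r (k + 1)) * (b * d k)) :
    Summable d ∧ (∀ k, ∑' j, d (k + 1 + j) ≤ d k + b / a * φ (r (k + 1))) ∧
      Tendsto r atTop (𝓝 0) := by
  have hmono := hφconc.monotoneOn_of_hasDerivAt_nonneg hφderiv fun s hs => (hφ'pos s hs).le
  set e : ℕ → ℝ := fun k => b / a * φ (r (k + 1))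
  have he : ∀ k, 0 ≤ e k := fun k => mul_nonneg (by positivity)
    (hφ0 ▸ hmono (left_mem_Ico.2 ((hr 0).1.trans_lt (hr 0).2)) (hr (k + 1)) (hr (k + 1)).1)
  have hchain : ∀ i, 2 * d (i + 1) ≤ d i + (e i - e (i + 1)) := by
    intro i
    rcases (hr (i + 1)).1.eq_or_lt with h0 | hpos
    · have h2 : r (i + 2) = 0 :=
        le_antisymm (by nlinarith [hstep (i + 1), sq_nonneg (d (i + 1))]) (hr (i + 2)).1
      have hd0 : d (i + 1) = 0 := pow_eq_zero_iff two_ne_zero |>.1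
        (le_antisymm (by nlinarith [hstep (i + 1)]) (sq_nonneg _))
      simp only [e, hd0, ← h0, h2, sub_self]
      linarith [hd i]
    have hρ : r (i + 1) ∈ Ioo 0 R := ⟨hpos, (hr (i + 1)).2⟩
    have htangent := hφconc.le_add_mul_sub_of_hasDerivAt (hr (i + 1)) (hr (i + 2)) (hφderiv _ hρ)
    have h := two_mul_le_add_of_sq_le ha (hφ'pos _ hρ) (hd i)
      (by linarith [hstep (i + 1)] : a * d (i + 1) ^ 2 ≤ r (i + 1) - r (i + 2))
      (by linarith : φ' (r (i + 1)) * (r (i + 1) - r (i + 2)) ≤ φ (r (i + 1)) - φ (r (i + 2)))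
      (hkl i hpos)
    simp only [e]
    linarith
  have hsum := sum_range_le_of_two_mul_le hd he hchain
  have hd_sum : Summable d := (summable_nat_add_iff 1).1 <|
    summable_of_sum_range_le (fun _ => hd _) fun n => by simpa only [add_comm 1] using hsum 0 n
  refine ⟨hd_sum, fun k => Real.tsum_le_of_sum_range_le (fun _ => hd _) (hsum k), ?_⟩
  exact tendsto_zero_of_one_le_mul
    ((hφconc.subset Ioo_subset_Ico_self (convex_Ioo 0 R)).antitoneOn_of_hasDerivAt_s10 hφderiv)
    (antitone_nat_of_succ_le fun k => by nlinarith [hstep k, hd k]) (fun k => (hr k).1) (hr 0).2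
    (fun k => mul_nonneg hb (hd k)) (by simpa using hd_sum.tendsto_atTop_zero.const_mul b) hkl

theorem EReal.exists_coe_of_add_le {v : ℕ → EReal} {c : ℕ → ℝ} (hbot : ∀ k, v k ≠ ⊥)
    (h0 : v 0 ≠ ⊤) (h : ∀ k, v (k + 1) + c k ≤ v k) :
    ∃ r : ℕ → ℝ, (∀ k, v k = r k) ∧ ∀ k, r (k + 1) + c k ≤ r k := by
  have htop : ∀ k, v k ≠ ⊤ := by
    intro k
    induction k with
    | zero => exact h0
    | succ k ih =>
      intro hk
      have := h k
      rw [hk, EReal.top_add_coe, top_le_iff] at this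
      exact ih this
  have hcoe : ∀ k, v k = (v k).toReal := fun k => (EReal.coe_toReal (htop k) (hbot k)).symm
  refine ⟨fun k => (v k).toReal, hcoe, fun k => ?_⟩
  have := h k
  rw [hcoe k, hcoe (k + 1)] at this
  exact_mod_cast this

theorem exists_real_descent_of_kl {E : Type*} [NormedAddCommGroup E] [InnerProductSpace ℝ E]
    {f : E → EReal} {φ' : ℝ → ℝ} {R a b r0 : ℝ} {x : ℕ → E} (hbot : ∀ y, f y ≠ ⊥)
    (hf0 : ∀ y, 0 ≤ f y) (hφ'pos : ∀ s ∈ Ioo 0 R, 0 < φ' s)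
    (hKL : ∀ y, 0 < f y → f y < (R : EReal) → ∀ u ∈ subdiff f y, 1 ≤ φ' ((f y).toReal) * ‖u‖)
    (ha : 0 ≤ a)
    (hH1 : ∀ k, f (x (k + 1)) + ((a * ‖x (k + 1) - x k‖ ^ 2 : ℝ) : EReal) ≤ f (x k))
    (hH2 : ∀ k, ∃ ω ∈ subdiff f (x (k + 1)), ‖ω‖ ≤ b * ‖x (k + 1) - x k‖)
    (hr0 : r0 < R) (hfx0 : f (x 0) = (r0 : EReal)) :
    ∃ r : ℕ → ℝ, (∀ k, f (x k) = r k) ∧ (∀ k, r k ∈ Icc 0 r0) ∧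
      (∀ k, r (k + 1) + a * ‖x (k + 1) - x k‖ ^ 2 ≤ r k) ∧
      ∀ k, 0 < r (k + 1) → 1 ≤ φ' (r (k + 1)) * (b * ‖x (k + 1) - x k‖) := by
  obtain ⟨r, hfr, hstep⟩ := EReal.exists_coe_of_add_le (fun k => hbot (x k)) (by simp [hfx0]) hH1
  have hanti : Antitone r := antitone_nat_of_succ_le fun k => by nlinarith [hstep k]
  have hr : ∀ k, r k ∈ Icc 0 r0 := fun k =>
    ⟨by exact_mod_cast hfr k ▸ hf0 (x k),
      (hanti (Nat.zero_le k)).trans (by exact_mod_cast (hfr 0).symm.trans hfx0 |>.le)⟩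
  refine ⟨r, hfr, hr, hstep, fun k hpos => ?_⟩
  obtain ⟨ω, hω, hωb⟩ := hH2 k
  have hρ : r (k + 1) ∈ Ioo 0 R := ⟨hpos, (hr (k + 1)).2.trans_lt hr0⟩
  have h := hKL (x (k + 1)) (by rw [hfr]; exact_mod_cast hpos) (by rw [hfr]; exact_mod_cast hρ.2)
    ω hω
  rw [hfr, EReal.toReal_coe] at h
  exact h.trans (mul_le_mul_of_nonneg_left hωb (hφ'pos _ hρ).le)

theorem mem_argminSet_of_tendsto {X : Type*} [TopologicalSpace X] {f : X → EReal} {x : ℕ → X}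
    {xstar : X} (hf : LowerSemicontinuous f) (hf0 : ∀ y, 0 ≤ f y)
    (hx : Tendsto x atTop (𝓝 xstar)) (hfx : Tendsto (f ∘ x) atTop (𝓝 0)) :
    xstar ∈ argminSet f := by
  suffices f xstar ≤ 0 from fun y => this.trans (hf0 y)
  by_contra! hpos
  obtain ⟨c, hc0, hcf⟩ := exists_between hpos
  obtain ⟨k, hk1, hk2⟩ :=
    ((hx.eventually (hf xstar c hcf)).and (hfx.eventually_lt_const hc0)).exists
  exact lt_irrefl c (hk1.trans hk2)

theorem stmt10_general (f : H → EReal)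
    (hbot : ∀ x, f x ≠ ⊥)
    (hlsc : LowerSemicontinuous f)
    (hmin : ∃ z, z ∈ argminSet f ∧ f z = 0)
    (rbar : ℝ)
    (φ φ' : ℝ → ℝ)
    (hφderiv : ∀ s ∈ Ioo (0 : ℝ) rbar, HasDerivAt φ (φ' s) s)
    (hφconc : ConcaveOn ℝ (Ico 0 rbar) φ)
    (hφ0 : φ 0 = 0)
    (hφ'pos : ∀ s ∈ Ioo (0 : ℝ) rbar, 0 < φ' s)
    (hKL : ∀ x, 0 < f x → f x < (rbar : EReal) →
      ∀ u ∈ subdiff f x, 1 ≤ φ' ((f x).toReal) * ‖u‖)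
    (a b : ℝ) (ha : 0 < a) (hb : 0 < b)
    (x : ℕ → H)
    (hH1 : ∀ k : ℕ, f (x (k + 1)) + ((a * ‖x (k + 1) - x k‖ ^ 2 : ℝ) : EReal) ≤ f (x k))
    (hH2 : ∀ k : ℕ, ∃ ω ∈ subdiff f (x (k + 1)), ‖ω‖ ≤ b * ‖x (k + 1) - x k‖)
    (r0 : ℝ) (hr0 : r0 < rbar) (hfx0 : f (x 0) = (r0 : EReal))
    -- `ψ` is the inverse of `φ` restricted to `[0,r₀]`, mapping `[0,α₀]` to `[0,r₀]`
    (ψ : ℝ → ℝ)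
    (hψφ : ∀ s ∈ Icc 0 r0, ψ (φ s) = s)
    (hφψ : ∀ u ∈ Icc 0 (φ r0), φ (ψ u) = u)
    (hψmem : ∀ u ∈ Icc 0 (φ r0), ψ u ∈ Icc 0 r0)
    -- assumption (A)
    (ψ' : ℝ → ℝ) (ℓ : ℝ) (hℓ : 0 < ℓ)
    (hψderiv : ∀ u ∈ Icc 0 (φ r0), HasDerivWithinAt ψ (ψ' u) (Icc 0 (φ r0)) u)
    (hψ'lip : ∀ u ∈ Icc 0 (φ r0), ∀ v ∈ Icc 0 (φ r0), |ψ' u - ψ' v| ≤ ℓ * |u - v|)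
    -- the one-dimensional worst-case proximal sequence
    (ζ : ℝ) (hζ : ζ = (Real.sqrt (1 + 2 * ℓ * a / b ^ 2) - 1) / ℓ)
    (α : ℕ → ℝ) (hα0 : α 0 = φ r0)
    (hαmem : ∀ k : ℕ, α (k + 1) ∈ Icc 0 (φ r0))
    (hαmin : ∀ k : ℕ, ∀ u ∈ Icc 0 (φ r0),
      ψ (α (k + 1)) + (α (k + 1) - α k) ^ 2 / (2 * ζ)
        ≤ ψ u + (u - α k) ^ 2 / (2 * ζ)) :
    ∃ xstar ∈ argminSet f, Tendsto x atTop (nhds xstar) ∧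
      (∀ k : ℕ, f (x k) ≤ ((ψ (α k) : ℝ) : EReal)) ∧
      ∀ k : ℕ, ‖x (k + 1) - xstar‖ ≤
        (b / a) * α (k + 1) + Real.sqrt (ψ (α k) / a) := by
  have hf0 : ∀ y, 0 ≤ f y := by
    obtain ⟨z, hz, hz0⟩ := hmin
    exact fun y => hz0 ▸ hz y
  obtain ⟨r, hfr, hr, hstep, hkl⟩ :=
    exists_real_descent_of_kl hbot hf0 hφ'pos hKL ha.le hH1 hH2 hr0 hfx0
  have hcomp := map_le_prox_and_le_inv_of_kl hφconc hφderiv hφ'pos hφ0 hr0 hψφ hφψ hψmem hψderiv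
    hψ'lip hℓ ha hb hζ hr (by exact_mod_cast (hfr 0).symm.trans hfx0) hstep hkl hα0 hαmem hαmin
  set d : ℕ → ℝ := fun k => ‖x (k + 1) - x k‖
  obtain ⟨hsum, htail, hrlim⟩ := summable_tsum_le_tendsto_of_kl hφconc hφderiv hφ'pos hφ0 ha
    hb.le (fun k => ⟨(hr k).1, (hr k).2.trans_lt hr0⟩) (fun k => norm_nonneg _) hstep hkl
  have hdist : ∀ n, dist (x n) (x n.succ) ≤ d n := fun n => (dist_eq_norm' _ _).le
  obtain ⟨xstar, hx⟩ :=
    cauchySeq_tendsto_of_complete (cauchySeq_of_dist_le_of_summable d hdist hsum)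
  refine ⟨xstar, mem_argminSet_of_tendsto hlsc hf0 hx ?_, hx, fun k => ?_, fun k => ?_⟩
  · simpa only [Function.comp_def, hfr, EReal.coe_zero] using
      (continuous_coe_real_ereal.tendsto 0).comp hrlim
  · rw [hfr]; exact_mod_cast (hcomp k).2
  have hdk : d k ≤ √(ψ (α k) / a) := Real.le_sqrt_of_sq_le <| by
    rw [le_div_iff₀ ha]; nlinarith [hstep k, (hcomp k).2, (hr (k + 1)).1]
  calc ‖x (k + 1) - xstar‖ = dist (x (k + 1)) xstar := (dist_eq_norm _ _).symm
    _ ≤ ∑' j, d (k + 1 + j) := dist_le_tsum_of_dist_le_of_tendsto d hdist hsum hx (k + 1)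
    _ ≤ d k + b / a * φ (r (k + 1)) := htail k
    _ ≤ b / a * α (k + 1) + √(ψ (α k) / a) := by
      nlinarith [mul_le_mul_of_nonneg_left (hcomp (k + 1)).1 (by positivity : 0 ≤ b / a)]

/-- **Theorem 4.4** (complexity of descent sequences for convex KL functions via
the one-dimensional worst-case proximal sequence): `f` proper lsc convex with
`min f = 0` and KL on `[0 < f < r̄]` with `φ ∈ 𝒦(0,r̄)`; `(x_k)` a subgradient
descent sequence with constants `a, b > 0` and `f(x₀) = r₀ ∈ (0,r̄)`;
`α₀ = φ(r₀)`, `ψ = (φ|_{[0,r₀]})⁻¹ : [0,α₀] → [0,r₀]`; assumption (A): `ψ'` is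
`ℓ`-Lipschitz on `[0,α₀]` with `ψ'(0) = 0`; `ζ = (√(1+2ℓab⁻²) − 1)/ℓ`; and
`α_{k+1}` minimizes `u ↦ ψ(u) + (u − α_k)²/(2ζ)` over `[0,α₀]`.  Then `x_k`
converges strongly to some `x* ∈ argmin f`, `f(x_k) ≤ ψ(α_k)` for all `k ≥ 0`,
and `‖x_k − x*‖ ≤ (b/a)α_k + √(ψ(α_{k−1})/a)` for all `k ≥ 1` (the latter is
stated with the index shift `k ↦ k+1`). -/
theorem stmt10 (f : H → EReal)
    (hbot : ∀ x, f x ≠ ⊥) (htop : ∃ x, f x ≠ ⊤)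
    (hlsc : LowerSemicontinuous f)
    (hconv : ∀ x y : H, ∀ t : ℝ, 0 < t → t < 1 →
      f (t • x + (1 - t) • y) ≤ (t : EReal) * f x + ((1 - t : ℝ) : EReal) * f y)
    (hmin : ∃ z, z ∈ argminSet f ∧ f z = 0)
    (rbar : ℝ) (hrbar : 0 < rbar)
    (φ φ' : ℝ → ℝ)
    (hφcont : ContinuousOn φ (Ico 0 rbar))
    (hφderiv : ∀ s ∈ Ioo (0 : ℝ) rbar, HasDerivAt φ (φ' s) s)
    (hφ'cont : ContinuousOn φ' (Ioo 0 rbar))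
    (hφconc : ConcaveOn ℝ (Ico 0 rbar) φ)
    (hφ0 : φ 0 = 0)
    (hφ'pos : ∀ s ∈ Ioo (0 : ℝ) rbar, 0 < φ' s)
    (hKL : ∀ x, 0 < f x → f x < (rbar : EReal) →
      ∀ u ∈ subdiff f x, 1 ≤ φ' ((f x).toReal) * ‖u‖)
    (a b : ℝ) (ha : 0 < a) (hb : 0 < b)
    (x : ℕ → H)
    (hH1 : ∀ k : ℕ, f (x (k + 1)) + ((a * ‖x (k + 1) - x k‖ ^ 2 : ℝ) : EReal) ≤ f (x k))
    (hH2 : ∀ k : ℕ, ∃ ω ∈ subdiff f (x (k + 1)), ‖ω‖ ≤ b * ‖x (k + 1) - x k‖)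
    (r0 : ℝ) (hr0pos : 0 < r0) (hr0 : r0 < rbar) (hfx0 : f (x 0) = (r0 : EReal))
    -- `ψ` is the inverse of `φ` restricted to `[0,r₀]`, mapping `[0,α₀]` to `[0,r₀]`
    (ψ : ℝ → ℝ)
    (hψφ : ∀ s ∈ Icc 0 r0, ψ (φ s) = s)
    (hφψ : ∀ u ∈ Icc 0 (φ r0), φ (ψ u) = u)
    (hψmem : ∀ u ∈ Icc 0 (φ r0), ψ u ∈ Icc 0 r0)
    -- assumption (A)
    (ψ' : ℝ → ℝ) (ℓ : ℝ) (hℓ : 0 < ℓ)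
    (hψderiv : ∀ u ∈ Icc 0 (φ r0), HasDerivWithinAt ψ (ψ' u) (Icc 0 (φ r0)) u)
    (hψ'lip : ∀ u ∈ Icc 0 (φ r0), ∀ v ∈ Icc 0 (φ r0), |ψ' u - ψ' v| ≤ ℓ * |u - v|)
    (hψ'0 : ψ' 0 = 0)
    -- the one-dimensional worst-case proximal sequence
    (ζ : ℝ) (hζ : ζ = (Real.sqrt (1 + 2 * ℓ * a / b ^ 2) - 1) / ℓ)
    (α : ℕ → ℝ) (hα0 : α 0 = φ r0)
    (hαmem : ∀ k : ℕ, α (k + 1) ∈ Icc 0 (φ r0))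
    (hαmin : ∀ k : ℕ, ∀ u ∈ Icc 0 (φ r0),
      ψ (α (k + 1)) + (α (k + 1) - α k) ^ 2 / (2 * ζ)
        ≤ ψ u + (u - α k) ^ 2 / (2 * ζ)) :
    ∃ xstar ∈ argminSet f, Tendsto x atTop (nhds xstar) ∧
      (∀ k : ℕ, f (x k) ≤ ((ψ (α k) : ℝ) : EReal)) ∧
      ∀ k : ℕ, ‖x (k + 1) - xstar‖ ≤
        (b / a) * α (k + 1) + Real.sqrt (ψ (α k) / a) :=
  stmt10_general f hbot hlsc hmin rbar φ φ' hφderiv hφconc hφ0 hφ'pos hKL a b ha hb x hH1 hH2 r0 hr0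
    hfx0 ψ hψφ hφψ hψmem ψ' ℓ hℓ hψderiv hψ'lip ζ hζ α hα0 hαmem hαmin
end
end

section
/- Comparison of one-dimensional proximal sequences (Claim 2 in the proof of Theorem 4.4): let ψ : [0,∞) → ℝ be convex and differentiable with ψ′ continuous, nondecreasing, ψ′(0) = 0 and ψ′(s) > 0 for s > 0. Let (λ⁰_k)_{k≥0} and (λ¹_k)_{k≥0} be positive sequences with λ⁰_k ≥ λ¹_k for all k, and let (β⁰_k)_{k≥0}, (β¹_k)_{k≥0} be sequences of nonnegative reals with β⁰₀ = β¹₀ > 0 satisfying β⁰_{k+1} + λ⁰_k ψ′(β⁰_{k+1}) = β⁰_k and β¹_{k+1} + λ¹_k ψ′(β¹_{k+1}) = β¹_k for all k ≥ 0. Then β⁰_k ≤ β¹_k for all k ≥ 0. -/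
open Set

/-- Comparison of resolvents: with `f` monotone, a larger step `a ≥ b` and a smaller input give a
smaller value of `(I + a f)⁻¹`. -/
theorem MonotoneOn.le_of_add_mul_le_add_mul {s : Set ℝ} {f : ℝ → ℝ} (hf : MonotoneOn f s)
    {a b x y : ℝ} (hx : x ∈ s) (hy : y ∈ s) (ha : 0 ≤ a) (hba : b ≤ a) (hfy : 0 ≤ f y)
    (h : x + a * f x ≤ y + b * f y) : x ≤ y := by
  by_contra! hyx
  have hmul : b * f y ≤ a * f x :=
    mul_le_mul hba (hf hy hx hyx.le) hfy ha
  linarith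

theorem stmt12_general (ψ' : ℝ → ℝ)
    (hmono : MonotoneOn ψ' (Ici 0))
    (h0 : ψ' 0 = 0)
    (lam0 lam1 : ℕ → ℝ) (β0 β1 : ℕ → ℝ)
    (hlam0pos : ∀ k, 0 < lam0 k)
    (hlam : ∀ k, lam1 k ≤ lam0 k)
    (hβ0nonneg : ∀ k, 0 ≤ β0 k) (hβ1nonneg : ∀ k, 0 ≤ β1 k)
    (hinit : β0 0 = β1 0)
    (hrec0 : ∀ k, β0 (k + 1) + lam0 k * ψ' (β0 (k + 1)) = β0 k)
    (hrec1 : ∀ k, β1 (k + 1) + lam1 k * ψ' (β1 (k + 1)) = β1 k) :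
    ∀ k, β0 k ≤ β1 k := by
  intro k
  induction k with
  | zero => exact hinit.le
  | succ k ih =>
    have hψ'β1 : 0 ≤ ψ' (β1 (k + 1)) :=
      h0 ▸ hmono self_mem_Ici (hβ1nonneg _) (hβ1nonneg _)
    refine hmono.le_of_add_mul_le_add_mul (hβ0nonneg _) (hβ1nonneg _) (hlam0pos k).le
      (hlam k) hψ'β1 ?_
    rw [hrec0, hrec1]
    exact ih

/-- **Claim 2 in the proof of Theorem 4.4** (comparison of one-dimensional
proximal sequences): let `ψ : [0,∞) → ℝ` be convex and differentiable with `ψ'`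
continuous, nondecreasing, `ψ'(0) = 0` and `ψ'(s) > 0` for `s > 0`.  If
`(λ⁰_k)`, `(λ¹_k)` are positive sequences with `λ⁰_k ≥ λ¹_k`, and `(β⁰_k)`,
`(β¹_k)` are nonnegative with `β⁰₀ = β¹₀ > 0` and
`β⁰_{k+1} + λ⁰_k ψ'(β⁰_{k+1}) = β⁰_k`, `β¹_{k+1} + λ¹_k ψ'(β¹_{k+1}) = β¹_k`
for all `k`, then `β⁰_k ≤ β¹_k` for all `k`. -/
theorem stmt12 (ψ ψ' : ℝ → ℝ)
    (hconv : ConvexOn ℝ (Ici 0) ψ)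
    (hderiv : ∀ s ∈ Ici (0 : ℝ), HasDerivWithinAt ψ (ψ' s) (Ici 0) s)
    (hcont : ContinuousOn ψ' (Ici 0))
    (hmono : MonotoneOn ψ' (Ici 0))
    (h0 : ψ' 0 = 0)
    (hpos : ∀ s : ℝ, 0 < s → 0 < ψ' s)
    (lam0 lam1 : ℕ → ℝ) (β0 β1 : ℕ → ℝ)
    (hlam1pos : ∀ k, 0 < lam1 k) (hlam0pos : ∀ k, 0 < lam0 k)
    (hlam : ∀ k, lam1 k ≤ lam0 k)
    (hβ0nonneg : ∀ k, 0 ≤ β0 k) (hβ1nonneg : ∀ k, 0 ≤ β1 k)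
    (hinit : β0 0 = β1 0) (hinitpos : 0 < β0 0)
    (hrec0 : ∀ k, β0 (k + 1) + lam0 k * ψ' (β0 (k + 1)) = β0 k)
    (hrec1 : ∀ k, β1 (k + 1) + lam1 k * ψ' (β1 (k + 1)) = β1 k) :
    ∀ k, β0 k ≤ β1 k :=
  stmt12_general ψ' hmono h0 lam0 lam1 β0 β1 hlam0pos hlam hβ0nonneg hβ1nonneg hinit hrec0 hrec1
end
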